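/- arXiv:1106.3612 — 5 statements merged into one kernel-verified Lean document; each statement's English description precedes it below -/
import Mathlib

section
/- For all z, z̃ in the open unit disc of ℂ, (1/π) ∫∫_{|ζ|<1} z̄/((z̃ − ζ)(1 − z̄ζ)²) dξdη = (z̄ z̃̄ − 2z̄² + z̄³ z̃)/(1 − z̄ z̃)². -/
open MeasureTheory Metric ComplexConjugate

noncomputable section Aux

open Real Set


theorem my_integrableOn_polar_iff (g : ℝ × ℝ → ℂ) :
    IntegrableOn (fun p : ℝ × ℝ => p.1 • g (polarCoord.symm p)) polarCoord.target ↔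
      Integrable g := by
  set B : ℝ × ℝ → ℝ × ℝ →L[ℝ] ℝ × ℝ := fun p =>
    LinearMap.toContinuousLinearMap (Matrix.toLin (Module.Basis.finTwoProd ℝ) (Module.Basis.finTwoProd ℝ)
      !![cos p.2, -p.1 * sin p.2; sin p.2, p.1 * cos p.2])
  have A : ∀ p ∈ polarCoord.target, HasFDerivWithinAt polarCoord.symm (B p) polarCoord.target p :=
    fun p _ => (hasFDerivAt_polarCoord_symm p).hasFDerivWithinAt
  have B_det : ∀ p, (B p).det = p.1 := by
    intro p
    conv_rhs => rw [← one_mul p.1, ← cos_sq_add_sin_sq p.2]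
    simp only [B, neg_mul, LinearMap.det_toContinuousLinearMap, LinearMap.det_toLin,
      Matrix.det_fin_two_of, sub_neg_eq_add]
    ring
  have hinj : Set.InjOn polarCoord.symm polarCoord.target := by
    have := polarCoord.symm.injOn
    rwa [OpenPartialHomeomorph.symm_source] at this
  have h1 : IntegrableOn (fun p : ℝ × ℝ => p.1 • g (polarCoord.symm p)) polarCoord.target ↔
      IntegrableOn (fun p : ℝ × ℝ => |(B p).det| • g (polarCoord.symm p)) polarCoord.target := by
    apply integrableOn_congr_fun _ polarCoord.open_target.measurableSet
    intro p hp
    simp only [B_det, abs_of_pos (show 0 < p.1 from hp.1)]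
  have h2 : IntegrableOn (fun p : ℝ × ℝ => |(B p).det| • g (polarCoord.symm p))
      polarCoord.target ↔ IntegrableOn g (polarCoord.symm '' polarCoord.target) :=
    (integrableOn_image_iff_integrableOn_abs_det_fderiv_smul volume
      polarCoord.open_target.measurableSet A hinj g).symm
  have h3 : IntegrableOn g (polarCoord.symm '' polarCoord.target) ↔ Integrable g := by
    rw [polarCoord.symm_image_target_eq_source, IntegrableOn,
      Measure.restrict_congr_set polarCoord_source_ae_eq_univ, Measure.restrict_univ]
  exact h1.trans (h2.trans h3)

theorem my_complex_integrableOn_polar_iff (f : ℂ → ℂ) :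
    IntegrableOn (fun p : ℝ × ℝ => p.1 • f (Complex.polarCoord.symm p)) polarCoord.target ↔
      Integrable f := by
  rw [← (Complex.volume_preserving_equiv_real_prod.symm).integrable_comp_emb
      Complex.measurableEquivRealProd.symm.measurableEmbedding,
    ← my_integrableOn_polar_iff]
  rfl

theorem my_prod_subset (R : ℝ) :
    (Set.Ioo (0:ℝ) R ×ˢ Set.Ioo (-π) π) ⊆ polarCoord.target := by
  rw [polarCoord_target]
  exact Set.prod_mono Set.Ioo_subset_Ioi_self subset_rfl

theorem my_indicator_polar (f : ℂ → ℂ) (R : ℝ) : ∀ p ∈ polarCoord.target,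
      p.1 • (Set.indicator (ball (0:ℂ) R) f) (Complex.polarCoord.symm p) =
      Set.indicator (Set.Ioo (0:ℝ) R ×ˢ Set.Ioo (-π) π)
        (fun p : ℝ × ℝ => p.1 • f (Complex.polarCoord.symm p)) p := by
  rintro ⟨r, θ⟩ hp
  have hr : 0 < r := hp.1
  have hθ : θ ∈ Set.Ioo (-π) π := hp.2
  have hmem : Complex.polarCoord.symm (r, θ) ∈ ball (0:ℂ) R ↔ r < R := by
    rw [mem_ball_zero_iff, Complex.norm_polarCoord_symm, abs_of_pos hr]
  by_cases h : r < R
  · have hmem2 : ((r, θ) : ℝ × ℝ) ∈ Set.Ioo (0:ℝ) R ×ˢ Set.Ioo (-π) π :=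
      Set.mem_prod.mpr ⟨Set.mem_Ioo.mpr ⟨hr, h⟩, hθ⟩
    rw [Set.indicator_of_mem (hmem.mpr h), Set.indicator_of_mem hmem2]
  · rw [Set.indicator_of_notMem (fun hc => h (hmem.mp hc)),
      Set.indicator_of_notMem (fun hc => h hc.1.2), smul_zero]

theorem my_integral_ball_polar (f : ℂ → ℂ) (R : ℝ) :
    ∫ ζ in ball (0:ℂ) R, f ζ =
      ∫ p in Set.Ioo (0:ℝ) R ×ˢ Set.Ioo (-π) π, p.1 • f (Complex.polarCoord.symm p) := by
  rw [← integral_indicator measurableSet_ball, ← Complex.integral_comp_polarCoord_symm,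
    setIntegral_congr_fun polarCoord.open_target.measurableSet (my_indicator_polar f R),
    setIntegral_indicator (measurableSet_Ioo.prod measurableSet_Ioo),
    Set.inter_eq_self_of_subset_right (my_prod_subset R)]

theorem my_integrableOn_ball_polar_iff (f : ℂ → ℂ) (R : ℝ) :
    IntegrableOn f (ball (0:ℂ) R) ↔
      IntegrableOn (fun p : ℝ × ℝ => p.1 • f (Complex.polarCoord.symm p))
        (Set.Ioo (0:ℝ) R ×ˢ Set.Ioo (-π) π) := by
  have hS : MeasurableSet (Set.Ioo (0:ℝ) R ×ˢ Set.Ioo (-π) π) :=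
    measurableSet_Ioo.prod measurableSet_Ioo
  rw [← integrable_indicator_iff measurableSet_ball, ← my_complex_integrableOn_polar_iff,
    integrableOn_congr_fun (my_indicator_polar f R) polarCoord.open_target.measurableSet,
    IntegrableOn, integrable_indicator_iff hS, IntegrableOn, Measure.restrict_restrict hS,
    Set.inter_eq_self_of_subset_left (my_prod_subset R), IntegrableOn]

theorem my_symm_eq_circleMap (p : ℝ × ℝ) :
    Complex.polarCoord.symm p = circleMap 0 p.1 p.2 := by
  rw [Complex.polarCoord_symm_apply]
  simp [circleMap, Complex.exp_mul_I]

theorem my_circle_avg {r : ℝ} (hr : 0 < r) {g : ℂ → ℂ}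
    (hg : DiffContOnCl ℂ g (ball (0:ℂ) r)) :
    ∫ θ in Set.Ioo (-π) π, g (circleMap 0 r θ) = 2 * (π:ℂ) * g 0 := by
  have h0 : (0:ℂ) ∈ ball (0:ℂ) r := mem_ball_self hr
  have key := hg.circleIntegral_sub_inv_smul h0
  rw [circleIntegral] at key
  simp only [deriv_circleMap, sub_zero, smul_eq_mul] at key
  have heq : Set.EqOn
      (fun θ : ℝ => circleMap 0 r θ * Complex.I * ((circleMap 0 r θ)⁻¹ * g (circleMap 0 r θ)))
      (fun θ : ℝ => Complex.I * g (circleMap 0 r θ)) (Set.uIcc 0 (2*π)) := by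
    intro θ _
    have hne : circleMap 0 r θ ≠ 0 := circleMap_ne_center hr.ne'
    field_simp
  rw [intervalIntegral.integral_congr heq, intervalIntegral.integral_const_mul] at key
  have key2 : ∫ θ in (0:ℝ)..2*π, g (circleMap 0 r θ) = 2 * (π:ℂ) * g 0 := by
    apply mul_left_cancel₀ Complex.I_ne_zero
    rw [key]; ring
  have hper : Function.Periodic (fun θ : ℝ => g (circleMap 0 r θ)) (2*π) :=
    (periodic_circleMap 0 r).comp g
  have hshift := hper.intervalIntegral_add_eq (-π) 0
  rw [show -π + 2*π = π by ring, zero_add] at hshift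
  have hle : (-π:ℝ) ≤ π := by linarith [pi_pos]
  calc ∫ θ in Set.Ioo (-π) π, g (circleMap 0 r θ)
      = ∫ θ in Set.Ioc (-π) π, g (circleMap 0 r θ) := (integral_Ioc_eq_integral_Ioo).symm
    _ = ∫ θ in (-π)..π, g (circleMap 0 r θ) := (intervalIntegral.integral_of_le hle).symm
    _ = ∫ θ in (0:ℝ)..2*π, g (circleMap 0 r θ) := hshift
    _ = 2 * (π:ℂ) * g 0 := key2

theorem my_fubini (f : ℂ → ℂ) (hf : IntegrableOn f (ball (0:ℂ) 1)) :
    ∫ ζ in ball (0:ℂ) 1, f ζ =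
      ∫ r in Set.Ioo (0:ℝ) 1, ∫ θ in Set.Ioo (-π) π, (r:ℂ) * f (circleMap 0 r θ) := by
  have hfun : (fun p : ℝ × ℝ => p.1 • f (Complex.polarCoord.symm p)) =
      fun p : ℝ × ℝ => (p.1 : ℂ) * f (circleMap 0 p.1 p.2) := by
    funext p
    rw [my_symm_eq_circleMap, Complex.real_smul]
  have hint := (my_integrableOn_ball_polar_iff f 1).mp hf
  rw [hfun] at hint
  have hint2 : IntegrableOn (fun p : ℝ × ℝ => (p.1 : ℂ) * f (circleMap 0 p.1 p.2))
      (Set.Ioo (0:ℝ) 1 ×ˢ Set.Ioo (-π) π) (volume.prod volume) := by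
    rwa [← Measure.volume_eq_prod]
  rw [my_integral_ball_polar f 1, hfun, Measure.volume_eq_prod, setIntegral_prod _ hint2]

theorem my_half (c : ℂ) : ∫ r in Set.Ioo (0:ℝ) 1, (r:ℂ) * c = c / 2 := by
  have h12 : ∫ r in Set.Ioo (0:ℝ) 1, r = 1/2 := by
    rw [← integral_Ioc_eq_integral_Ioo, ← intervalIntegral.integral_of_le zero_le_one,
      integral_id]
    norm_num
  simp_rw [← Complex.real_smul]
  rw [integral_smul_const, h12, Complex.real_smul]
  push_cast
  ring

theorem my_disc_avg {g : ℂ → ℂ} (hg : DifferentiableOn ℂ g (closedBall (0:ℂ) 1)) :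
    ∫ ζ in ball (0:ℂ) 1, g ζ = (π:ℂ) * g 0 := by
  have hgi : IntegrableOn g (ball (0:ℂ) 1) :=
    (hg.continuousOn.integrableOn_compact (isCompact_closedBall _ _)).mono_set
      ball_subset_closedBall
  rw [my_fubini g hgi]
  have hinner : ∀ r ∈ Set.Ioo (0:ℝ) 1,
      (∫ θ in Set.Ioo (-π) π, (r:ℂ) * g (circleMap 0 r θ)) = (r:ℂ) * (2 * (π:ℂ) * g 0) := by
    intro r hr
    rw [integral_const_mul]
    congr 1
    apply my_circle_avg hr.1
    apply DifferentiableOn.diffContOnCl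
    rw [closure_ball (0:ℂ) hr.1.ne']
    exact hg.mono (closedBall_subset_closedBall (by exact_mod_cast hr.2.le))
  rw [setIntegral_congr_fun measurableSet_Ioo hinner, my_half]
  ring

theorem my_symm_cont : Continuous (fun p : ℝ × ℝ => Complex.polarCoord.symm p) := by
  have : (fun p : ℝ × ℝ => Complex.polarCoord.symm p) =
      fun p : ℝ × ℝ => (p.1 : ℂ) * (Real.cos p.2 + Real.sin p.2 * Complex.I) := by
    funext p; rw [Complex.polarCoord_symm_apply]
  rw [this]
  fun_prop

theorem my_inv_integrable : IntegrableOn (fun w : ℂ => w⁻¹) (ball (0:ℂ) 2) := by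
  rw [my_integrableOn_ball_polar_iff]
  have hS : MeasurableSet (Set.Ioo (0:ℝ) 2 ×ˢ Set.Ioo (-π) π) :=
    measurableSet_Ioo.prod measurableSet_Ioo
  have hne : ∀ p ∈ Set.Ioo (0:ℝ) 2 ×ˢ Set.Ioo (-π) π, Complex.polarCoord.symm p ≠ 0 := by
    intro p hp
    intro h
    have := Complex.norm_polarCoord_symm p
    rw [h] at this
    simp only [norm_zero] at this
    have := hp.1.1
    rw [abs_of_pos this] at *
    linarith [hp.1.1, this]
  have hcont : ContinuousOn (fun p : ℝ × ℝ => p.1 • (Complex.polarCoord.symm p)⁻¹)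
      (Set.Ioo (0:ℝ) 2 ×ˢ Set.Ioo (-π) π) :=
    continuous_fst.continuousOn.smul (my_symm_cont.continuousOn.inv₀ hne)
  apply Integrable.mono' (g := fun _ => (1:ℝ))
  · exact integrableOn_const (by
      rw [Measure.volume_eq_prod, Measure.prod_prod, Real.volume_Ioo, Real.volume_Ioo]
      exact (ENNReal.mul_lt_top ENNReal.ofReal_lt_top ENNReal.ofReal_lt_top).ne)
  · exact hcont.aestronglyMeasurable hS
  · refine (ae_restrict_iff' hS).2 (Filter.Eventually.of_forall fun p hp => ?_)
    rw [norm_smul, norm_inv, Complex.norm_polarCoord_symm,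
      Real.norm_eq_abs, abs_of_pos hp.1.1]
    exact le_of_eq (mul_inv_cancel₀ hp.1.1.ne')

theorem my_G_integrable {zt : ℂ} (h : ‖zt‖ < 1) :
    IntegrableOn (fun ζ : ℂ => (zt - ζ)⁻¹) (ball (0:ℂ) 1) := by
  have h1 : Integrable (Set.indicator (ball (0:ℂ) 2) (fun w : ℂ => w⁻¹)) :=
    (integrable_indicator_iff measurableSet_ball).2 my_inv_integrable
  have h2 := h1.comp_sub_right zt
  have h3 : (fun ζ : ℂ => (Set.indicator (ball (0:ℂ) 2) (fun w : ℂ => w⁻¹)) (ζ - zt)) =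
      Set.indicator (ball zt 2) (fun ζ : ℂ => (ζ - zt)⁻¹) := by
    funext ζ
    by_cases hm : ζ - zt ∈ ball (0:ℂ) 2
    · have hm2 : ζ ∈ ball zt 2 := by
        rw [mem_ball_zero_iff] at hm
        rw [mem_ball, Complex.dist_eq]
        simpa using hm
      rw [Set.indicator_of_mem hm, Set.indicator_of_mem hm2]
    · have hm2 : ζ ∉ ball zt 2 := by
        intro hc
        apply hm
        rw [mem_ball, Complex.dist_eq] at hc
        rw [mem_ball_zero_iff]
        simpa using hc
      rw [Set.indicator_of_notMem hm, Set.indicator_of_notMem hm2]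
  rw [h3] at h2
  have h4 : IntegrableOn (fun ζ : ℂ => (ζ - zt)⁻¹) (ball zt 2) :=
    (integrable_indicator_iff measurableSet_ball).1 h2
  have h5 : IntegrableOn (fun ζ : ℂ => (zt - ζ)⁻¹) (ball zt 2) := by
    have h4n : IntegrableOn (fun ζ : ℂ => -((ζ - zt)⁻¹)) (ball zt 2) := h4.neg
    apply h4n.congr_fun _ measurableSet_ball
    intro ζ _
    show -(ζ - zt)⁻¹ = (zt - ζ)⁻¹
    rw [← inv_neg, neg_sub]
  apply h5.mono_set
  intro ζ hζ
  rw [mem_ball_zero_iff] at hζ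
  rw [mem_ball, Complex.dist_eq]
  calc ‖ζ - zt‖ ≤ ‖ζ‖ + ‖zt‖ := by
        exact norm_sub_le ζ zt
    _ < 2 := by linarith

theorem my_G_value {zt : ℂ} (h : ‖zt‖ < 1) :
    ∫ ζ in ball (0:ℂ) 1, (zt - ζ)⁻¹ = (π:ℂ) * conj zt := by
  rw [my_fubini _ (my_G_integrable h)]
  have hinner : ∀ r ∈ Set.Ioo (0:ℝ) 1, r ≠ ‖zt‖ →
      (∫ θ in Set.Ioo (-π) π, (r:ℂ) * (zt - circleMap 0 r θ)⁻¹) =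
      Set.indicator (Set.Iio (‖zt‖))
        (fun s : ℝ => (s:ℂ) * (2 * (π:ℂ) * zt⁻¹)) r := by
    intro r hr hrne
    rw [integral_const_mul]
    by_cases hlt : r < ‖zt‖
    · rw [Set.indicator_of_mem (Set.mem_Iio.mpr hlt)]
      congr 1
      have hdc : DiffContOnCl ℂ (fun ζ : ℂ => (zt - ζ)⁻¹) (ball (0:ℂ) r) := by
        apply DifferentiableOn.diffContOnCl
        rw [closure_ball (0:ℂ) hr.1.ne']
        intro ζ hζ
        have hζr : ‖ζ‖ ≤ r := by
          simpa [Complex.dist_eq] using mem_closedBall.mp hζ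
        have hne : zt - ζ ≠ 0 := sub_ne_zero.2 (by intro e; rw [← e] at hζr; linarith)
        exact (((differentiableAt_const zt).sub differentiableAt_id).inv
          hne).differentiableWithinAt
      rw [my_circle_avg hr.1 hdc]
      simp
    · rw [Set.indicator_of_notMem (by simpa using hlt)]
      have hgt : ‖zt‖ < r :=
        lt_of_le_of_ne (not_lt.1 hlt) (fun e => hrne e.symm)
      set φ : ℂ → ℂ := fun ζ => ζ * (conj zt * ζ - ((r:ℂ))^2)⁻¹ with hφ
      have habsr2 : ‖((r:ℂ))^2‖ = r^2 := by
        rw [norm_pow]; simp [abs_of_pos hr.1]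
      have hpt : ∀ θ : ℝ, (zt - circleMap 0 r θ)⁻¹ = conj (φ (circleMap 0 r θ)) := by
        intro θ
        set w := circleMap 0 r θ with hw
        have hwabs : ‖w‖ = r := by
          rw [hw, norm_circleMap_zero, abs_of_pos hr.1]
        have hwne : w ≠ 0 := circleMap_ne_center hr.1.ne'
        have hcwne : conj w ≠ 0 := by
          intro hc
          apply hwne
          have := congrArg conj hc
          simpa using this
        have hmul : w * conj w = ((r:ℂ))^2 := by
          rw [Complex.mul_conj, ← Complex.sq_norm, hwabs]
          push_cast
          ring
        have hztw : zt - w ≠ 0 := sub_ne_zero.2 (by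
          intro e
          rw [e, hwabs] at hgt
          exact lt_irrefl _ hgt)
        show (zt - w)⁻¹ = conj (w * (conj zt * w - ((r:ℂ))^2)⁻¹)
        rw [map_mul, map_inv₀, map_sub, map_mul, Complex.conj_conj, map_pow,
          Complex.conj_ofReal, ← hmul,
          show zt * conj w - w * conj w = (zt - w) * conj w by ring, mul_inv]
        field_simp
      have hφdc : DiffContOnCl ℂ φ (ball (0:ℂ) r) := by
        apply DifferentiableOn.diffContOnCl
        rw [closure_ball (0:ℂ) hr.1.ne']
        intro ζ hζ
        have hζr : ‖ζ‖ ≤ r := by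
          simpa [Complex.dist_eq] using mem_closedBall.mp hζ
        have hne : conj zt * ζ - ((r:ℂ))^2 ≠ 0 := by
          intro e
          rw [sub_eq_zero] at e
          have h1 : ‖conj zt * ζ‖ < r^2 :=
            calc ‖conj zt * ζ‖ = ‖zt‖ * ‖ζ‖ := by
                  rw [norm_mul, Complex.norm_conj]
              _ ≤ ‖zt‖ * r :=
                  mul_le_mul_of_nonneg_left hζr (norm_nonneg zt)
              _ < r * r := mul_lt_mul_of_pos_right hgt hr.1
              _ = r^2 := (sq r).symm
          rw [e, habsr2] at h1
          exact lt_irrefl _ h1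
        have d2 : DifferentiableAt ℂ (fun ζ : ℂ => conj zt * ζ - ((r:ℂ))^2) ζ :=
          ((differentiableAt_const _).mul differentiableAt_id).sub (differentiableAt_const _)
        exact (differentiableAt_id.mul (d2.inv hne)).differentiableWithinAt
      have hzero : ∫ θ in Set.Ioo (-π) π, (zt - circleMap 0 r θ)⁻¹ = 0 := by
        calc ∫ θ in Set.Ioo (-π) π, (zt - circleMap 0 r θ)⁻¹
            = ∫ θ in Set.Ioo (-π) π, conj (φ (circleMap 0 r θ)) := by simp_rw [hpt]
          _ = conj (∫ θ in Set.Ioo (-π) π, φ (circleMap 0 r θ)) := integral_conj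
          _ = conj (2 * (π:ℂ) * φ 0) := by rw [my_circle_avg hr.1 hφdc]
          _ = 0 := by simp [hφ]
      rw [hzero, mul_zero]
  have hne_ae : ∀ᵐ (r:ℝ) ∂(volume : Measure ℝ), r ≠ ‖zt‖ := by
    rw [ae_iff]
    have : {r : ℝ | ¬ r ≠ ‖zt‖} = {‖zt‖} := by ext x; simp
    rw [this]
    exact measure_singleton _
  rw [setIntegral_congr_ae measurableSet_Ioo
    (hne_ae.mono fun r hr hmem => hinner r hmem hr)]
  rw [setIntegral_indicator measurableSet_Iio, Set.Ioo_inter_Iio, min_eq_right h.le]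
  simp_rw [← Complex.real_smul]
  rw [integral_smul_const]
  have hval : ∫ r in Set.Ioo (0:ℝ) (‖zt‖), r = (‖zt‖)^2 / 2 := by
    rw [← integral_Ioc_eq_integral_Ioo,
      ← intervalIntegral.integral_of_le (norm_nonneg zt), integral_id]
    ring
  rw [hval, Complex.real_smul]
  by_cases hzt0 : zt = 0
  · simp [hzt0]
  · have habs2 : ((‖zt‖ ^ 2 / 2 : ℝ) : ℂ) = zt * conj zt / 2 := by
      rw [Complex.mul_conj, Complex.normSq_eq_norm_sq]
      push_cast
      ring
    rw [habs2]
    field_simp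
    simp only [Complex.real_smul]
    ring

end Aux

open MeasureTheory Metric ComplexConjugate



theorem stmt_1 (z zt : ℂ) (hz : z ∈ ball (0 : ℂ) 1) (hzt : zt ∈ ball (0 : ℂ) 1) :
    (1 / (Real.pi : ℂ)) *
      ∫ ζ in ball (0 : ℂ) 1, conj z / ((zt - ζ) * (1 - conj z * ζ) ^ 2) =
    (conj z * conj zt - 2 * (conj z) ^ 2 + (conj z) ^ 3 * zt) / (1 - conj z * zt) ^ 2 := by
  set u : ℂ := conj z with hu
  have hua : ‖u‖ < 1 := by
    rw [hu, Complex.norm_conj]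
    simpa using mem_ball_zero_iff.mp hz
  have hzta : ‖zt‖ < 1 := by simpa using mem_ball_zero_iff.mp hzt
  set D : ℂ := 1 - u * zt with hD
  have hDne : D ≠ 0 := by
    rw [hD]
    apply sub_ne_zero.2
    intro e
    have habs : ‖u * zt‖ < 1 := by
      rw [norm_mul]
      calc ‖u‖ * ‖zt‖ ≤ ‖u‖ * 1 :=
            mul_le_mul_of_nonneg_left hzta.le (norm_nonneg u)
        _ < 1 := by simpa using hua
    rw [← e] at habs
    simp at habs
  set H : ℂ → ℂ := fun ζ => -(u^2/D) * ((1 - u*ζ)^2)⁻¹ - (u^2/D^2) * (1 - u*ζ)⁻¹ with hH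
  have hden : ∀ ζ ∈ closedBall (0:ℂ) 1, (1:ℂ) - u * ζ ≠ 0 := by
    intro ζ hζ
    have hζ1 : ‖ζ‖ ≤ 1 := by simpa using mem_closedBall_zero_iff.mp hζ
    intro e
    rw [sub_eq_zero] at e
    have habs : ‖u * ζ‖ < 1 := by
      rw [norm_mul]
      calc ‖u‖ * ‖ζ‖ ≤ ‖u‖ * 1 :=
            mul_le_mul_of_nonneg_left hζ1 (norm_nonneg u)
        _ < 1 := by simpa using hua
    rw [← e] at habs
    simp at habs
  have hHdiff : DifferentiableOn ℂ H (closedBall (0:ℂ) 1) := by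
    intro ζ hζ
    have h1 := hden ζ hζ
    have d1 : DifferentiableAt ℂ (fun ζ : ℂ => (1:ℂ) - u * ζ) ζ :=
      (differentiableAt_const _).sub ((differentiableAt_const _).mul differentiableAt_id)
    exact ((((d1.pow 2).inv (pow_ne_zero 2 h1)).const_mul _).sub
      ((d1.inv h1).const_mul _)).differentiableWithinAt
  have hHint : IntegrableOn H (ball (0:ℂ) 1) :=
    (hHdiff.continuousOn.integrableOn_compact (isCompact_closedBall _ _)).mono_set
      ball_subset_closedBall
  have hGint := my_G_integrable hzta
  have hae : ∀ᵐ (ζ:ℂ) ∂(volume : Measure ℂ), ζ ≠ zt := by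
    rw [ae_iff]
    have hset : {ζ : ℂ | ¬ ζ ≠ zt} = {zt} := by ext x; simp
    rw [hset]
    exact measure_singleton _
  have hsplit : ∫ ζ in ball (0:ℂ) 1, u / ((zt - ζ) * (1 - u * ζ) ^ 2) =
      (u/D^2) * ((Real.pi:ℂ) * conj zt) + (Real.pi:ℂ) * H 0 := by
    have hcongr : ∫ ζ in ball (0:ℂ) 1, u / ((zt - ζ) * (1 - u*ζ)^2) =
        ∫ ζ in ball (0:ℂ) 1, ((u/D^2) * (zt - ζ)⁻¹ + H ζ) := by
      apply setIntegral_congr_ae measurableSet_ball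
      filter_upwards [hae] with ζ hζ hζb
      have h1 : (1:ℂ) - u*ζ ≠ 0 := hden ζ (ball_subset_closedBall hζb)
      have h2 : zt - ζ ≠ 0 := sub_ne_zero.2 (Ne.symm hζ)
      have hDne' : (1:ℂ) - u * zt ≠ 0 := by rw [← hD]; exact hDne
      show u / ((zt - ζ) * (1 - u*ζ)^2) =
        u/D^2 * (zt - ζ)⁻¹ + (-(u^2/D) * ((1 - u*ζ)^2)⁻¹ - u^2/D^2 * (1 - u*ζ)⁻¹)
      rw [hD]
      field_simp [h1, h2, hDne']
      ring
    rw [hcongr, integral_add (hGint.const_mul _) hHint, integral_const_mul,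
      my_G_value hzta, my_disc_avg hHdiff]
  have hπ : ((Real.pi:ℝ):ℂ) ≠ 0 := Complex.ofReal_ne_zero.2 Real.pi_ne_zero
  rw [hsplit]
  have hH0 : H 0 = -(u^2/D) - u^2/D^2 := by rw [hH]; simp
  have hDne' : (1:ℂ) - u * zt ≠ 0 := by rw [← hD]; exact hDne
  rw [hH0, hD]
  field_simp [hπ, hDne']
  ring
end

section
/- For all z, z̃ in the open unit disc of ℂ, (1/π) ∫∫_{|ζ|<1} ((1 − |ζ|²)/ζ) · log(1 − ζ z̃̄) · z̄/(1 − z̄ζ)² dξdη = − (z̄ z̃̄)/2. -/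
open MeasureTheory Metric ComplexConjugate

open Real Set

lemma circleAvg (h : ℂ → ℂ) {r : ℝ} (hr : 0 < r) (hd : DiffContOnCl ℂ h (ball (0:ℂ) r)) :
    ∫ θ in (0:ℝ)..(2*Real.pi), h (circleMap 0 r θ) = (2*Real.pi : ℂ) * h 0 := by
  have hC := hd.circleIntegral_sub_inv_smul (w := 0) (mem_ball_self hr)
  have h1 : (∮ z in C(0, r), (z - 0)⁻¹ • h z)
      = Complex.I * ∫ θ in (0:ℝ)..(2*Real.pi), h (circleMap 0 r θ) := by
    rw [circleIntegral, ← intervalIntegral.integral_const_mul]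
    refine intervalIntegral.integral_congr fun θ _ => ?_
    have hne : circleMap 0 r θ ≠ 0 := circleMap_ne_center hr.ne'
    simp only [deriv_circleMap, sub_zero, smul_eq_mul]
    field_simp
  rw [h1] at hC
  apply mul_left_cancel₀ Complex.I_ne_zero
  rw [hC, smul_eq_mul]
  ring

lemma polar_symm_eq (r θ : ℝ) : Complex.polarCoord.symm (r, θ) = circleMap 0 r θ := by
  rw [Complex.polarCoord_symm_apply, circleMap]
  rw [Complex.exp_mul_I]
  push_cast
  ring

lemma polar_symm_norm (r θ : ℝ) (hr : 0 ≤ r) : ‖Complex.polarCoord.symm (r, θ)‖ = r := by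
  rw [Complex.norm_polarCoord_symm, abs_of_nonneg hr]

set_option maxHeartbeats 1000000 in
lemma key (h : ℂ → ℂ) (hd : DifferentiableOn ℂ h (ball (0:ℂ) 1))
    (hc : ContinuousOn h (closedBall (0:ℂ) 1)) :
    ∫ ζ in ball (0:ℂ) 1, ((1:ℂ) - (‖ζ‖ : ℂ)^2) * h ζ
      = ((Real.pi/2 : ℝ) : ℂ) * h 0 := by
  obtain ⟨M, hM⟩ := (isCompact_closedBall (0:ℂ) 1).exists_bound_of_continuousOn hc
  set S : Set (ℝ × ℝ) := Ioo (0:ℝ) 1 ×ˢ Ioo (-Real.pi) Real.pi with hS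
  have hSmeas : MeasurableSet S := measurableSet_Ioo.prod measurableSet_Ioo
  set G : ℝ × ℝ → ℂ := fun p => (p.1 * (1 - p.1^2)) • h (Complex.polarCoord.symm p) with hG
  have hT : polarCoord.target = Ioi (0:ℝ) ×ˢ Ioo (-Real.pi) Real.pi := rfl
  have hSsub : S ⊆ polarCoord.target := by
    rw [hT]
    exact Set.prod_mono Ioo_subset_Ioi_self subset_rfl
  have step1 : ∫ ζ in ball (0:ℂ) 1, ((1:ℂ) - (‖ζ‖ : ℂ)^2) * h ζ
      = ∫ p in S, G p := by
    rw [← integral_indicator measurableSet_ball, ← Complex.integral_comp_polarCoord_symm]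
    have : ∀ p ∈ polarCoord.target,
        p.1 • (Set.indicator (ball (0:ℂ) 1)
          (fun ζ => ((1:ℂ) - (‖ζ‖ : ℂ)^2) * h ζ)) (Complex.polarCoord.symm p)
        = Set.indicator S G p := by
      rintro ⟨r, θ⟩ hp
      rw [hT] at hp
      obtain ⟨hr, hθ⟩ := hp
      simp only [Set.mem_Ioi] at hr
      have habs : ‖Complex.polarCoord.symm (r, θ)‖ = r := polar_symm_norm r θ hr.le
      by_cases h1 : r < 1
      · rw [Set.indicator_of_mem (by rw [mem_ball_zero_iff, habs]; exact h1),
          Set.indicator_of_mem (show ((r,θ) : ℝ × ℝ) ∈ S from ⟨⟨hr, h1⟩, hθ⟩)]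
        simp only [hG]
        have : (‖Complex.polarCoord.symm (r, θ)‖ : ℂ) = (r : ℂ) := by
          rw [habs]
        rw [this, Complex.real_smul, Complex.real_smul]
        push_cast
        ring
      · rw [Set.indicator_of_notMem (by rw [mem_ball_zero_iff, habs]; exact fun hh => h1 hh),
          Set.indicator_of_notMem (fun hmem => h1 hmem.1.2)]
        simp
    rw [setIntegral_congr_fun (polarCoord.open_target.measurableSet) this,
      setIntegral_indicator hSmeas, Set.inter_eq_self_of_subset_right hSsub]
  rw [step1]
  have hfin : volume S < ⊤ := by
    rw [hS, Measure.volume_eq_prod, Measure.prod_prod, Real.volume_Ioo, Real.volume_Ioo]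
    exact ENNReal.mul_lt_top ENNReal.ofReal_lt_top ENNReal.ofReal_lt_top
  have hGcont : ContinuousOn G S := by
    apply ContinuousOn.fun_smul
    · exact (continuous_fst.mul (continuous_const.sub (continuous_fst.pow 2))).continuousOn
    · have csymm : Continuous (fun p : ℝ × ℝ => Complex.polarCoord.symm p) := by
        have : Continuous (fun p : ℝ × ℝ =>
            ((p.1 : ℂ) * (Real.cos p.2 + Real.sin p.2 * Complex.I))) := by continuity
        exact this.congr fun p => (Complex.polarCoord_symm_apply p).symm
      apply hc.comp csymm.continuousOn
      rintro ⟨r, θ⟩ ⟨⟨hr0, hr1⟩, _⟩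
      show Complex.polarCoord.symm (r, θ) ∈ closedBall 0 1
      rw [mem_closedBall_zero_iff, polar_symm_norm r θ hr0.le]
      exact hr1.le
  have hGint : IntegrableOn G S := by
    haveI : IsFiniteMeasure (volume.restrict S) :=
      ⟨by rwa [Measure.restrict_apply_univ]⟩
    refine ⟨hGcont.aestronglyMeasurable hSmeas, HasFiniteIntegral.of_bounded (C := M) ?_⟩
    filter_upwards [ae_restrict_mem hSmeas] with p hp
    obtain ⟨⟨hr0, hr1⟩, _⟩ := hp
    have hb : ‖Complex.polarCoord.symm p‖ ≤ 1 := by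
      rw [← Prod.mk.eta (p := p), polar_symm_norm _ _ hr0.le]; exact hr1.le
    calc ‖G p‖ = |p.1 * (1 - p.1^2)| * ‖h (Complex.polarCoord.symm p)‖ := by
          rw [hG, norm_smul, Real.norm_eq_abs]
      _ ≤ 1 * M := by
          apply mul_le_mul _ (hM _ (mem_closedBall_zero_iff.2 hb)) (norm_nonneg _) zero_le_one
          rw [abs_mul, abs_of_pos hr0, abs_of_pos (by nlinarith : (0:ℝ) < 1 - p.1^2)]
          nlinarith
      _ = M := one_mul M
  have inner : ∀ r ∈ Ioo (0:ℝ) 1,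
      ∫ θ in Ioo (-Real.pi) Real.pi, G (r, θ)
        = (r * (1 - r^2)) • ((2*Real.pi : ℂ) * h 0) := by
    intro r hr
    have hcm : ∀ θ : ℝ, G (r, θ) = (r * (1 - r^2)) • h (circleMap 0 r θ) := by
      intro θ; rw [hG]; simp only; rw [polar_symm_eq]
    simp_rw [hcm]
    rw [integral_smul]
    congr 1
    have hper : Function.Periodic (fun θ => h (circleMap 0 r θ)) (2*Real.pi) :=
      (periodic_circleMap 0 r).comp h
    have e1 : ∫ θ in Ioo (-Real.pi) Real.pi, h (circleMap 0 r θ)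
        = ∫ θ in (-Real.pi)..Real.pi, h (circleMap 0 r θ) := by
      rw [intervalIntegral.integral_of_le (by linarith [Real.pi_pos]),
        integral_Ioc_eq_integral_Ioo]
    have e2 := hper.intervalIntegral_add_eq (-Real.pi) 0
    rw [show -Real.pi + 2*Real.pi = Real.pi by ring, show (0:ℝ) + 2*Real.pi = 2*Real.pi by ring] at e2
    rw [e1, e2]
    exact circleAvg h hr.1 ⟨hd.mono (ball_subset_ball hr.2.le),
      hc.mono ((closure_ball_subset_closedBall).trans (closedBall_subset_closedBall hr.2.le))⟩
  calc ∫ p in S, G p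
      = ∫ r in Ioo (0:ℝ) 1, ∫ θ in Ioo (-Real.pi) Real.pi, G (r, θ) := by
        rw [hS, Measure.volume_eq_prod]
        exact setIntegral_prod G (by rwa [hS, Measure.volume_eq_prod] at hGint)
    _ = ∫ r in Ioo (0:ℝ) 1, (r * (1 - r^2)) • ((2*Real.pi : ℂ) * h 0) :=
        setIntegral_congr_fun measurableSet_Ioo inner
    _ = (∫ r in Ioo (0:ℝ) 1, r * (1 - r^2)) • ((2*Real.pi : ℂ) * h 0) :=
        integral_smul_const _ _
    _ = ((Real.pi/2 : ℝ) : ℂ) * h 0 := by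
        have hval : ∫ r in Ioo (0:ℝ) 1, r * (1 - r^2) = 1/4 := by
          rw [← integral_Ioc_eq_integral_Ioo,
            ← intervalIntegral.integral_of_le zero_le_one]
          have : ∀ r : ℝ, r * (1 - r^2) = r - r^3 := fun r => by ring
          simp_rw [this]
          rw [intervalIntegral.integral_sub intervalIntegral.intervalIntegrable_id
            (intervalIntegral.intervalIntegrable_pow 3)]
          rw [integral_id, integral_pow]
          norm_num
        rw [hval, Complex.real_smul]
        push_cast
        ring

theorem stmt_2 (z zt : ℂ) (hz : z ∈ ball (0 : ℂ) 1) (hzt : zt ∈ ball (0 : ℂ) 1) :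
    (1 / (Real.pi : ℂ)) *
      ∫ ζ in ball (0 : ℂ) 1,
        ((1 - (‖ζ‖ : ℂ) ^ 2) / ζ) * Complex.log (1 - ζ * conj zt) *
          (conj z / (1 - conj z * ζ) ^ 2) =
    -(conj z * conj zt) / 2 := by
  have hw : ‖(conj z : ℂ)‖ < 1 := by
    rw [RCLike.norm_conj]; exact mem_ball_zero_iff.1 hz
  have hv : ‖(conj zt : ℂ)‖ < 1 := by
    rw [RCLike.norm_conj]; exact mem_ball_zero_iff.1 hzt
  set v : ℂ := conj zt
  set w : ℂ := conj z
  set F : ℂ → ℂ := fun t => Complex.log (1 - t * v) with hF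
  set h : ℂ → ℂ := fun ζ => dslope F 0 ζ * (w / (1 - w * ζ)^2) with hh
  -- the open set where everything is nice
  set U : Set ℂ := {ζ | 1 - ζ * v ∈ Complex.slitPlane ∧ 1 - w * ζ ≠ 0} with hU
  have hUopen : IsOpen U := by
    apply IsOpen.inter
    · exact Complex.isOpen_slitPlane.preimage (by continuity)
    · exact isOpen_ne.preimage (by continuity)
  have hUmem : ∀ ζ : ℂ, ‖ζ‖ ≤ 1 → ζ ∈ U := by
    intro ζ hζ
    constructor
    · rw [sub_eq_add_neg]
      apply Complex.mem_slitPlane_of_norm_lt_one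
      rw [norm_neg, norm_mul]
      calc ‖ζ‖ * ‖v‖ ≤ 1 * ‖v‖ := by
            exact mul_le_mul_of_nonneg_right hζ (norm_nonneg _)
        _ < 1 := by rwa [one_mul]
    · intro hcon
      have : (1:ℂ) = w * ζ := by linear_combination hcon
      have h1 : (1:ℝ) = ‖w * ζ‖ := by rw [← this, norm_one]
      rw [norm_mul] at h1
      nlinarith [norm_nonneg w, norm_nonneg ζ]
  have h0U : (0:ℂ) ∈ U := hUmem 0 (by simp)
  have hFdiff : DifferentiableOn ℂ F U := by
    intro t ht
    apply DifferentiableAt.differentiableWithinAt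
    exact (Complex.differentiableAt_log ht.1).comp t
      (((differentiable_id.mul_const v).const_sub 1).differentiableAt)
  have hdsl : DifferentiableOn ℂ (dslope F 0) U :=
    (Complex.differentiableOn_dslope (hUopen.mem_nhds h0U)).mpr hFdiff
  have hhdiff : DifferentiableOn ℂ h U := by
    apply hdsl.mul
    apply DifferentiableOn.div (differentiableOn_const w)
    · exact (((differentiable_const w).mul differentiable_id).const_sub 1).differentiableOn.pow 2
    · intro ζ hζ
      exact pow_ne_zero 2 hζ.2
  have hball : closedBall (0:ℂ) 1 ⊆ U := fun ζ hζ => hUmem ζ (mem_closedBall_zero_iff.1 hζ)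
  have hd : DifferentiableOn ℂ h (ball (0:ℂ) 1) :=
    hhdiff.mono (ball_subset_closedBall.trans hball)
  have hcont : ContinuousOn h (closedBall (0:ℂ) 1) :=
    (hhdiff.continuousOn).mono hball
  -- value at 0
  have hF0 : F 0 = 0 := by simp [hF, Complex.log_one]
  have hderiv : deriv F 0 = -v := by
    have h1 : HasDerivAt (fun t : ℂ => 1 - t * v) (-v) 0 :=
      (hasDerivAt_mul_const v).const_sub 1
    have h2 : HasDerivAt F ((1 - (0:ℂ) * v)⁻¹ * -v) 0 := by
      have hs : (1 - (0:ℂ) * v) ∈ Complex.slitPlane := h0U.1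
      exact (Complex.hasDerivAt_log hs).comp 0 h1
    simpa using h2.deriv
  have hh0 : h 0 = -v * w := by
    rw [hh]
    simp only [dslope_same, hderiv, mul_zero, sub_zero, one_pow, div_one]
  -- a.e. equality of integrands
  have hcongr : ∫ ζ in ball (0 : ℂ) 1,
        ((1 - (‖ζ‖ : ℂ) ^ 2) / ζ) * Complex.log (1 - ζ * v) *
          (w / (1 - w * ζ) ^ 2)
      = ∫ ζ in ball (0:ℂ) 1, ((1:ℂ) - (‖ζ‖ : ℂ)^2) * h ζ := by
    apply setIntegral_congr_ae measurableSet_ball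
    have hne : ∀ᵐ ζ : ℂ, ζ ≠ 0 := by
      have h0 : (volume : Measure ℂ) {(0:ℂ)} = 0 := by
        exact measure_singleton 0
      rw [ae_iff]
      simpa [Classical.not_not] using h0
    filter_upwards [hne] with ζ hζ _
    rw [hh]
    simp only
    rw [dslope_of_ne F hζ, slope_def_field, hF0, hF]
    simp only [sub_zero]
    ring
  rw [hcongr, key h hd hcont, hh0]
  have hpi : (Real.pi : ℂ) ≠ 0 := Complex.ofReal_ne_zero.mpr Real.pi_ne_zero
  push_cast
  field_simp
end

section
/- For every z in the open unit disc of ℂ, (1/π) ∫∫_{|ζ|<1} 1/((1 − z̄ζ) ζ) dξdη = z̄. -/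
open MeasureTheory Metric ComplexConjugate Set
open scoped Real

noncomputable section

def Complex.abs : ℂ →*₀ ℝ := normHom

theorem Complex.norm_eq_abs (z : ℂ) : ‖z‖ = Complex.abs z := rfl

theorem Complex.abs.nonneg (z : ℂ) : 0 ≤ Complex.abs z := norm_nonneg z

theorem Complex.abs_exp_ofReal_mul_I (x : ℝ) : Complex.abs (Complex.exp (x * Complex.I)) = 1 :=
  Complex.norm_exp_ofReal_mul_I x

theorem Complex.abs_ofReal (x : ℝ) : Complex.abs (x : ℂ) = |x| := by
  show ‖(x : ℂ)‖ = |x|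
  rw [Complex.norm_real, Real.norm_eq_abs]

theorem Complex.abs_conj (z : ℂ) : Complex.abs (conj z) = Complex.abs z := Complex.norm_conj z

private lemma aux_circle (a : ℂ) (ha : Complex.abs a < 1) :
    (∫ θ in (0:ℝ)..(2*Real.pi), (1 - a * Complex.exp (θ * Complex.I))⁻¹) = 2*Real.pi := by
  have hne : ∀ w ∈ closedBall (0:ℂ) 1, (1 : ℂ) - a * w ≠ 0 := by
    intro w hw
    have hw1 : Complex.abs w ≤ 1 := by simpa [Complex.norm_eq_abs] using mem_closedBall_zero_iff.mp hw
    intro h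
    have h1 : a * w = 1 := by linear_combination -h
    have h2 := congrArg Complex.abs h1
    rw [map_mul, map_one] at h2
    nlinarith [Complex.abs.nonneg w, Complex.abs.nonneg a]
  have hd : DifferentiableOn ℂ (fun w => ((1:ℂ) - a * w)⁻¹) (closedBall (0:ℂ) 1) := by
    exact DifferentiableOn.inv
      (((differentiable_const (1:ℂ)).sub (differentiable_id.const_mul a)).differentiableOn) hne
  have key := hd.circleIntegral_sub_inv_smul (w := 0) (mem_ball_self one_pos)
  unfold circleIntegral at key
  have h1 : ∀ θ : ℝ, deriv (circleMap 0 1) θ •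
      (((circleMap 0 1 θ - 0)⁻¹) • ((1 : ℂ) - a * circleMap 0 1 θ)⁻¹)
      = Complex.I * (1 - a * Complex.exp (θ * Complex.I))⁻¹ := by
    intro θ
    have he : Complex.exp (θ * Complex.I) ≠ 0 := Complex.exp_ne_zero _
    have h2 : (1 : ℂ) - a * Complex.exp (θ * Complex.I) ≠ 0 := by
      apply hne
      rw [mem_closedBall_zero_iff, Complex.norm_eq_abs, Complex.abs_exp_ofReal_mul_I]
    simp only [deriv_circleMap, circleMap_zero, one_mul, sub_zero, smul_eq_mul]
    field_simp
    push_cast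
    ring
  rw [intervalIntegral.integral_congr (fun θ _ => h1 θ),
    intervalIntegral.integral_const_mul] at key
  have key2 : Complex.I * (∫ θ in (0:ℝ)..(2*Real.pi), (1 - a * Complex.exp (θ * Complex.I))⁻¹)
      = Complex.I * (2*Real.pi) := by
    rw [key]; simp [smul_eq_mul]; ring
  exact mul_left_cancel₀ Complex.I_ne_zero key2

private lemma aux_circle' (a : ℂ) (ha : Complex.abs a < 1) :
    (∫ θ in Ioo (-Real.pi) Real.pi, (1 - a * Complex.exp (θ * Complex.I))⁻¹) = 2*Real.pi := by
  have hper : Function.Periodic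
      (fun θ : ℝ => ((1:ℂ) - a * Complex.exp (θ * Complex.I))⁻¹) (2*Real.pi) := by
    intro θ
    simp only [Complex.ofReal_add]
    rw [add_mul, Complex.exp_add]
    norm_num [Complex.exp_two_pi_mul_I]
  have h3 := hper.intervalIntegral_add_eq (-Real.pi) 0
  rw [← MeasureTheory.integral_Ioc_eq_integral_Ioo,
    ← intervalIntegral.integral_of_le (by linarith [Real.pi_pos] : -Real.pi ≤ Real.pi)]
  have e1 : -Real.pi + 2*Real.pi = Real.pi := by ring
  have e2 : (0:ℝ) + 2*Real.pi = 2*Real.pi := by ring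
  rw [e1, e2] at h3
  rw [h3, aux_circle a ha]

private lemma aux_exp :
    (∫ θ in Ioo (-Real.pi) Real.pi, (Complex.exp (θ * Complex.I))⁻¹) = 0 := by
  rw [← MeasureTheory.integral_Ioc_eq_integral_Ioo,
    ← intervalIntegral.integral_of_le (by linarith [Real.pi_pos] : -Real.pi ≤ Real.pi)]
  have h : ∀ θ : ℝ, (Complex.exp ((θ:ℂ) * Complex.I))⁻¹ = Complex.exp ((-Complex.I) * θ) := by
    intro θ
    rw [← Complex.exp_neg]
    ring_nf
  rw [intervalIntegral.integral_congr (fun θ _ => h θ),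
    integral_exp_mul_complex (by simpa using Complex.I_ne_zero)]
  have e1 : (-Complex.I) * ((Real.pi : ℝ) : ℂ) = -((Real.pi : ℂ) * Complex.I) := by ring
  have e2 : (-Complex.I) * ((-Real.pi : ℝ) : ℂ) = (Real.pi : ℂ) * Complex.I := by
    push_cast; ring
  rw [e1, e2, Complex.exp_neg, Complex.exp_pi_mul_I]
  norm_num

private lemma inner_int (c : ℂ) (hc : Complex.abs c < 1) {r : ℝ} (hr : r ∈ Ioo (0:ℝ) 1) :
    (∫ θ in Ioo (-Real.pi) Real.pi, (r:ℂ) *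
        (((1 - c * ((r:ℂ) * Complex.exp (θ * Complex.I))) *
          ((r:ℂ) * Complex.exp (θ * Complex.I)))⁻¹))
      = (r:ℂ) * (2 * Real.pi * c) := by
  obtain ⟨hr0, hr1⟩ := hr
  have habs : Complex.abs (c * r) < 1 := by
    rw [map_mul, Complex.abs_ofReal, abs_of_pos hr0]
    nlinarith [Complex.abs.nonneg c]
  have hone : ∀ θ : ℝ, (1:ℂ) - c * ((r:ℂ) * Complex.exp (θ * Complex.I)) ≠ 0 := by
    intro θ h
    have h1 : c * ((r:ℂ) * Complex.exp (θ * Complex.I)) = 1 := by linear_combination -h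
    have h2 := congrArg Complex.abs h1
    rw [map_mul, map_mul, Complex.abs_exp_ofReal_mul_I, mul_one, map_one, Complex.abs_ofReal,
      abs_of_pos hr0] at h2
    nlinarith [Complex.abs.nonneg c]
  have hsplit : ∀ θ ∈ Ioo (-Real.pi) Real.pi, (r:ℂ) *
      (((1 - c * ((r:ℂ) * Complex.exp (θ * Complex.I))) *
        ((r:ℂ) * Complex.exp (θ * Complex.I)))⁻¹)
      = (Complex.exp (θ * Complex.I))⁻¹
        + ((r:ℂ) * c) * (1 - (c * r) * Complex.exp (θ * Complex.I))⁻¹ := by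
    intro θ _
    have he : Complex.exp ((θ:ℂ) * Complex.I) ≠ 0 := Complex.exp_ne_zero _
    have hrne : (r:ℂ) ≠ 0 := by exact_mod_cast hr0.ne'
    have h0 := hone θ
    have h0' : (1:ℂ) - c * (r:ℂ) * Complex.exp (θ * Complex.I) ≠ 0 := by
      intro h; exact h0 (by linear_combination h)
    have h0'' : (1:ℂ) - (r:ℂ) * c * Complex.exp (θ * Complex.I) ≠ 0 := by
      intro h; exact h0 (by linear_combination h)
    field_simp
    ring
  rw [setIntegral_congr_fun measurableSet_Ioo hsplit]
  have hi1 : IntegrableOn (fun θ : ℝ => (Complex.exp ((θ:ℂ) * Complex.I))⁻¹)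
      (Ioo (-Real.pi) Real.pi) := by
    apply (Continuous.integrableOn_Icc ?_).mono_set Ioo_subset_Icc_self
    exact Continuous.inv₀ (by fun_prop) (fun θ => Complex.exp_ne_zero _)
  have hi2 : IntegrableOn
      (fun θ : ℝ => ((r:ℂ) * c) * (1 - (c * r) * Complex.exp ((θ:ℂ) * Complex.I))⁻¹)
      (Ioo (-Real.pi) Real.pi) := by
    apply (Continuous.integrableOn_Icc ?_).mono_set Ioo_subset_Icc_self
    apply Continuous.mul continuous_const
    apply Continuous.inv₀ (by fun_prop)
    intro θ
    intro h
    have h1 : c * (r:ℂ) * Complex.exp ((θ:ℂ) * Complex.I) = 1 := by linear_combination -h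
    have h2 := congrArg Complex.abs h1
    rw [map_mul, Complex.abs_exp_ofReal_mul_I, mul_one, map_one] at h2
    exact absurd h2 (ne_of_lt habs)
  rw [integral_add hi1 hi2, aux_exp, MeasureTheory.integral_const_mul,
    aux_circle' (c * r) habs]
  push_cast
  ring

theorem stmt_15 (z : ℂ) (hz : z ∈ ball (0 : ℂ) 1) :
    (1 / (Real.pi : ℂ)) * ∫ ζ in ball (0 : ℂ) 1, 1 / ((1 - conj z * ζ) * ζ) =
    conj z := by
  set c : ℂ := conj z with hc_def
  have hc : Complex.abs c < 1 := by
    rw [hc_def, Complex.abs_conj]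
    simpa [Complex.norm_eq_abs] using mem_ball_zero_iff.mp hz
  set f : ℂ → ℂ := fun ζ => ((1 - c * ζ) * ζ)⁻¹ with hf_def
  set S : Set (ℝ × ℝ) := Ioo (0:ℝ) 1 ×ˢ Ioo (-Real.pi) Real.pi with hS_def
  set g : ℝ × ℝ → ℂ := fun p => (p.1 : ℂ) * f ((p.1 : ℂ) * Complex.exp (p.2 * Complex.I))
    with hg_def
  have key : (∫ ζ in ball (0:ℂ) 1, f ζ) = Real.pi * c := by
    rw [← MeasureTheory.integral_indicator measurableSet_ball,
      ← Complex.integral_comp_polarCoord_symm]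
    have hScases : ∀ p ∈ polarCoord.target,
        p.1 • (Set.indicator (ball (0:ℂ) 1) f) (Complex.polarCoord.symm p)
        = Set.indicator S g p := by
      intro p hp
      rw [polarCoord_target] at hp
      obtain ⟨hp1, hp2⟩ := hp
      have hsymm : Complex.polarCoord.symm p = (p.1 : ℂ) * Complex.exp (p.2 * Complex.I) := by
        rw [Complex.polarCoord_symm_apply, Complex.exp_mul_I]
        push_cast
        ring
      have habs : Complex.abs ((p.1:ℂ) * Complex.exp (p.2 * Complex.I)) = p.1 := by
        rw [map_mul, Complex.abs_exp_ofReal_mul_I, mul_one, Complex.abs_ofReal,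
          abs_of_pos hp1]
      by_cases h : p.1 < 1
      · rw [hsymm, Set.indicator_of_mem, Set.indicator_of_mem, hg_def, Complex.real_smul]
        · exact ⟨⟨hp1, h⟩, hp2⟩
        · rw [mem_ball_zero_iff, Complex.norm_eq_abs, habs]; exact h
      · rw [hsymm, Set.indicator_of_notMem, Set.indicator_of_notMem, smul_zero]
        · exact fun hmem => h hmem.1.2
        · rw [mem_ball_zero_iff, Complex.norm_eq_abs, habs]; exact h
    rw [setIntegral_congr_fun polarCoord.open_target.measurableSet hScases,
      MeasureTheory.setIntegral_indicator (measurableSet_Ioo.prod measurableSet_Ioo)]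
    have hinter : polarCoord.target ∩ S = S := by
      apply inter_eq_self_of_subset_right
      rw [polarCoord_target, hS_def]
      exact prod_mono Ioo_subset_Ioi_self subset_rfl
    rw [hinter]
    -- integrability of g on S
    have hgcont : ContinuousOn g S := by
      apply ContinuousOn.mul (by fun_prop)
      apply ContinuousOn.inv₀
      · fun_prop
      · rintro ⟨r, θ⟩ ⟨⟨hr0, hr1⟩, hθ⟩
        have habs : Complex.abs ((r:ℂ) * Complex.exp ((θ:ℝ) * Complex.I)) = r := by
          rw [map_mul, Complex.abs_exp_ofReal_mul_I, mul_one, Complex.abs_ofReal,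
            abs_of_pos hr0]
        apply mul_ne_zero
        · intro h
          have h1 : c * ((r:ℂ) * Complex.exp ((θ:ℝ) * Complex.I)) = 1 := by
            linear_combination -h
          have h2 := congrArg Complex.abs h1
          rw [map_mul, habs, map_one] at h2
          nlinarith [Complex.abs.nonneg c]
        · intro h
          rw [h, map_zero] at habs
          exact hr0.ne habs
    have hSfin : volume S ≠ ⊤ := by
      rw [hS_def, Measure.volume_eq_prod, Measure.prod_prod]
      exact (ENNReal.mul_lt_top measure_Ioo_lt_top measure_Ioo_lt_top).ne
    have hmS : MeasurableSet S := measurableSet_Ioo.prod measurableSet_Ioo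
    have hbound : ∀ p ∈ S, ‖g p‖ ≤ (1 - Complex.abs c)⁻¹ := by
      rintro ⟨r, θ⟩ ⟨⟨hr0, hr1⟩, hθ⟩
      have habs : Complex.abs ((r:ℂ) * Complex.exp ((θ:ℝ) * Complex.I)) = r := by
        rw [map_mul, Complex.abs_exp_ofReal_mul_I, mul_one, Complex.abs_ofReal,
          abs_of_pos hr0]
      have hd : (1 : ℝ) - Complex.abs c * r ≤ Complex.abs (1 - c * ((r:ℂ) *
          Complex.exp ((θ:ℝ) * Complex.I))) := by
        calc (1:ℝ) - Complex.abs c * r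
            = Complex.abs 1 - Complex.abs (c * ((r:ℂ) * Complex.exp ((θ:ℝ) * Complex.I))) := by
              rw [map_one, map_mul, habs]
          _ ≤ _ := by
              have := norm_sub_norm_le (1 : ℂ) (c * ((r:ℂ) *
                Complex.exp ((θ:ℝ) * Complex.I)))
              exact this
      have hpos : (0:ℝ) < 1 - Complex.abs c := by linarith
      have hpos2 : (0:ℝ) < 1 - Complex.abs c * r := by
        nlinarith [Complex.abs.nonneg c]
      have hdpos : (0:ℝ) < Complex.abs (1 - c * ((r:ℂ) * Complex.exp ((θ:ℝ) * Complex.I))) :=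
        lt_of_lt_of_le hpos2 hd
      have hnorm : ‖g (r, θ)‖
          = (Complex.abs (1 - c * ((r:ℂ) * Complex.exp ((θ:ℝ) * Complex.I))))⁻¹ := by
        simp only [hg_def, hf_def]
        rw [norm_mul, norm_inv, norm_mul, Complex.norm_eq_abs, Complex.norm_eq_abs,
          Complex.norm_eq_abs]
        rw [habs, Complex.abs_ofReal, abs_of_pos hr0, mul_inv, mul_comm (Complex.abs _)⁻¹ r⁻¹,
          ← mul_assoc, mul_inv_cancel₀ hr0.ne', one_mul]
      rw [hnorm, inv_le_inv₀ hdpos hpos]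
      nlinarith [Complex.abs.nonneg c]
    have hint : IntegrableOn g S volume := by
      refine ⟨hgcont.aestronglyMeasurable hmS, ?_⟩
      apply HasFiniteIntegral.restrict_of_bounded (C := (1 - Complex.abs c)⁻¹) hSfin.lt_top
      filter_upwards [ae_restrict_mem hmS] with p hp using hbound p hp
    rw [hS_def] at hint ⊢
    rw [Measure.volume_eq_prod] at hint ⊢
    rw [MeasureTheory.setIntegral_prod g hint]
    have hinner : ∀ r ∈ Ioo (0:ℝ) 1,
        (∫ θ in Ioo (-Real.pi) Real.pi, g (r, θ)) = r • (2 * (Real.pi:ℂ) * c) := by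
      intro r hr
      rw [Complex.real_smul]
      exact inner_int c hc hr
    rw [setIntegral_congr_fun measurableSet_Ioo hinner, integral_smul_const]
    have h1 : (∫ a in Ioo (0:ℝ) 1, a ∂volume) = 1/2 := by
      rw [← MeasureTheory.integral_Ioc_eq_integral_Ioo,
        ← intervalIntegral.integral_of_le zero_le_one, integral_id]
      norm_num
    rw [h1, Complex.real_smul]
    push_cast
    ring
  have hπ : (Real.pi : ℂ) ≠ 0 := by exact_mod_cast Real.pi_ne_zero
  calc (1 / (Real.pi : ℂ)) * ∫ ζ in ball (0 : ℂ) 1, 1 / ((1 - c * ζ) * ζ)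
      = (1 / (Real.pi : ℂ)) * ∫ ζ in ball (0 : ℂ) 1, f ζ := by
        rw [hf_def]; simp only [one_div]
    _ = c := by rw [key]; field_simp

end
end

section
/- For all z, z̃ in the open unit disc of ℂ with z ≠ 0, the contour integral (1/(2πi)) ∫_{|ζ|=1} ζ̄ · log(1 − ζ z̃̄)/(ζ(ζ − z)) dζ over the counterclockwise-oriented unit circle equals log(1 − z z̃̄)/z² + z̃̄/z (on the unit circle ζ̄ = 1/ζ). -/
open MeasureTheory Metric ComplexConjugate

theorem stmt_18 (z zt : ℂ) (hz : z ∈ ball (0 : ℂ) 1) (hzt : zt ∈ ball (0 : ℂ) 1)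
    (hz0 : z ≠ 0) :
    (1 / (2 * (Real.pi : ℂ) * Complex.I)) *
      (∮ ζ in C(0, 1), conj ζ * Complex.log (1 - ζ * conj zt) / (ζ * (ζ - z))) =
    Complex.log (1 - z * conj zt) / z ^ 2 + conj zt / z := by
  set w : ℂ := conj zt with hw_def
  have hz1 : ‖z‖ < 1 := by simpa [Complex.dist_eq] using hz
  have hw1 : ‖w‖ < 1 := by
    simpa [hw_def, Complex.dist_eq] using hzt
  set f : ℂ → ℂ := fun ζ => Complex.log (1 - ζ * w) with hf_def
  set S : Set ℂ := {ζ : ℂ | ‖ζ‖ * ‖w‖ < 1} with hS_def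
  have hSopen : IsOpen S := by
    have : Continuous fun ζ : ℂ => ‖ζ‖ * ‖w‖ :=
      (continuous_norm).mul continuous_const
    exact isOpen_lt this continuous_const
  have hS : closedBall (0 : ℂ) 1 ⊆ S := by
    intro ζ hζ
    have hζ1 : ‖ζ‖ ≤ 1 := by simpa [Complex.dist_eq] using hζ
    have := mul_le_of_le_one_left (norm_nonneg w) hζ1
    calc ‖ζ‖ * ‖w‖ ≤ ‖w‖ := this
      _ < 1 := hw1
  have hslit : ∀ ζ ∈ S, (1 - ζ * w) ∈ Complex.slitPlane := by
    intro ζ hζ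
    rw [Complex.mem_slitPlane_iff]
    left
    have h1 : (ζ * w).re ≤ ‖ζ * w‖ := Complex.re_le_norm _
    have h2 : ‖ζ * w‖ < 1 := by
      rw [norm_mul]; exact hζ
    simp only [Complex.sub_re, Complex.one_re]
    linarith
  have hfd : DifferentiableOn ℂ f S := by
    intro ζ hζ
    have h1 : DifferentiableAt ℂ (fun ζ : ℂ => 1 - ζ * w) ζ :=
      (differentiableAt_const 1).sub (differentiableAt_id.mul_const w)
    exact (h1.clog (hslit ζ hζ)).differentiableWithinAt
  have h0S : (0 : ℂ) ∈ S := hS (mem_closedBall_self zero_le_one)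
  -- f is analytic at 0
  have hfa : AnalyticAt ℂ f 0 := by
    have h1 : AnalyticAt ℂ (fun ζ : ℂ => 1 - ζ * w) 0 :=
      analyticAt_const.sub (analyticAt_id.mul analyticAt_const)
    exact h1.clog (hslit 0 h0S)
  set d1 : ℂ → ℂ := dslope f 0 with hd1_def
  set g : ℂ → ℂ := dslope d1 0 with hg_def
  have hga : AnalyticAt ℂ g 0 := by
    obtain ⟨p, hp⟩ := hfa
    exact (hp.has_fpower_series_dslope_fslope.has_fpower_series_dslope_fslope).analyticAt
  have hgd : DifferentiableOn ℂ g S := by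
    intro x hx
    rcases eq_or_ne x 0 with rfl | hx0
    · exact hga.differentiableAt.differentiableWithinAt
    · refine (differentiableWithinAt_dslope_of_ne hx0).2 ?_
      exact (differentiableWithinAt_dslope_of_ne hx0).2 (hfd x hx)
  have hgcl : DiffContOnCl ℂ g (ball (0 : ℂ) 1) :=
    (hgd.mono (closure_ball_subset_closedBall.trans hS)).diffContOnCl
  have key := hgcl.circleIntegral_sub_inv_smul hz
  -- deriv f 0 = -w
  have hf0 : f 0 = 0 := by simp [hf_def]
  have hder : HasDerivAt f (-w) 0 := by
    have h1 : HasDerivAt (fun ζ : ℂ => 1 - ζ * w) (-w) 0 := by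
      simpa using ((hasDerivAt_id (0 : ℂ)).mul_const w).const_sub 1
    have h2 := h1.clog (hslit 0 h0S)
    simpa using h2
  have hd10 : d1 0 = -w := by
    rw [hd1_def, dslope_same]
    exact hder.deriv
  have hd1v : ∀ ζ : ℂ, ζ ≠ 0 → d1 ζ = ζ⁻¹ * f ζ := by
    intro ζ hζ
    rw [hd1_def, dslope_of_ne _ hζ, slope_def_field]
    field_simp [hf0]
    simp [hf0]
  have hgv : ∀ ζ : ℂ, ζ ≠ 0 → g ζ = ζ⁻¹ * (ζ⁻¹ * f ζ + w) := by
    intro ζ hζ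
    rw [hg_def, dslope_of_ne _ hζ, slope_def_field, hd1v ζ hζ, hd10]
    field_simp
    ring
  have hπ : (2 * (Real.pi : ℂ) * Complex.I) ≠ 0 := by
    simp [Real.pi_ne_zero, Complex.I_ne_zero, Complex.ofReal_ne_zero]
  -- the integrand equality on the sphere
  have hEq : Set.EqOn (fun ζ : ℂ => conj ζ * Complex.log (1 - ζ * w) / (ζ * (ζ - z)))
      (fun ζ : ℂ => (ζ - z)⁻¹ • g ζ - (w / z) * ((ζ - z)⁻¹ - (ζ - 0)⁻¹))
      (sphere (0 : ℂ) 1) := by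
    intro ζ hζ
    have hζabs : ‖ζ‖ = 1 := by simpa [Complex.dist_eq] using hζ
    have hζ0 : ζ ≠ 0 := by
      intro h; rw [h] at hζabs; simp at hζabs
    have hζz : ζ - z ≠ 0 := by
      intro h
      have hzz : ζ = z := sub_eq_zero.mp h
      exact (ne_of_lt hz1) (hzz ▸ hζabs)
    have hconj : conj ζ = ζ⁻¹ := by
      rw [Complex.inv_def]
      have : Complex.normSq ζ = 1 := by
        rw [← Complex.sq_norm, hζabs]; norm_num
      simp [this]
    simp only [hgv ζ hζ0, hconj, sub_zero, hf_def, smul_eq_mul]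
    field_simp
    ring
  -- rewrite the contour integral
  have hgc : ContinuousOn g (sphere (0 : ℂ) 1) :=
    (hgd.continuousOn).mono ((sphere_subset_closedBall).trans hS)
  have hint1 : CircleIntegrable (fun ζ : ℂ => (ζ - z)⁻¹ • g ζ) 0 1 := by
    apply ContinuousOn.circleIntegrable zero_le_one
    refine ContinuousOn.smul (f := fun ζ : ℂ => (ζ - z)⁻¹) ?_ hgc
    apply ContinuousOn.inv₀ ((continuousOn_id.sub continuousOn_const))
    intro ζ hζ
    have hζabs : ‖ζ‖ = 1 := by simpa [Complex.dist_eq] using hζ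
    intro h
    have hzz : ζ = z := sub_eq_zero.mp h
    exact (ne_of_lt hz1) (hzz ▸ hζabs)
  have hzsph : z ∉ sphere (0 : ℂ) (|(1 : ℝ)|) := by
    simp only [abs_one]
    intro h
    have : ‖z‖ = 1 := by simpa [Complex.dist_eq] using h
    exact absurd this (ne_of_lt hz1)
  have h0sph : (0 : ℂ) ∉ sphere (0 : ℂ) (|(1 : ℝ)|) := by
    simp
  have hintz : CircleIntegrable (fun ζ : ℂ => (ζ - z)⁻¹) 0 1 :=
    circleIntegrable_sub_inv_iff.2 (Or.inr hzsph)
  have hint0 : CircleIntegrable (fun ζ : ℂ => (ζ - 0)⁻¹) 0 1 :=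
    circleIntegrable_sub_inv_iff.2 (Or.inr h0sph)
  have hns : ∀ a : ℂ, a ∈ ball (0:ℂ) 1 → ∀ ζ ∈ sphere (0:ℂ) 1, ζ - a ≠ 0 := by
    intro a ha ζ hζ h
    have hζabs : ‖ζ‖ = 1 := by simpa [Complex.dist_eq] using hζ
    have ha1 : ‖a‖ < 1 := by simpa [Complex.dist_eq] using ha
    have hzz : ζ = a := sub_eq_zero.mp h
    exact (ne_of_lt ha1) (hzz ▸ hζabs)
  have hint2 : CircleIntegrable (fun ζ : ℂ => (w / z) * ((ζ - z)⁻¹ - (ζ - 0)⁻¹)) 0 1 := by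
    apply ContinuousOn.circleIntegrable zero_le_one
    apply ContinuousOn.mul continuousOn_const
    apply ContinuousOn.sub
    · exact ContinuousOn.inv₀ (continuousOn_id.sub continuousOn_const) (hns z hz)
    · exact ContinuousOn.inv₀ (continuousOn_id.sub continuousOn_const)
        (hns 0 (mem_ball_self one_pos))
  calc (1 / (2 * (Real.pi : ℂ) * Complex.I)) *
      (∮ ζ in C(0, 1), conj ζ * Complex.log (1 - ζ * w) / (ζ * (ζ - z)))
      = (1 / (2 * (Real.pi : ℂ) * Complex.I)) *
        (∮ ζ in C(0, 1), ((ζ - z)⁻¹ • g ζ - (w / z) * ((ζ - z)⁻¹ - (ζ - 0)⁻¹))) := by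
        rw [circleIntegral.integral_congr zero_le_one hEq]
    _ = (1 / (2 * (Real.pi : ℂ) * Complex.I)) *
        ((∮ ζ in C(0, 1), (ζ - z)⁻¹ • g ζ) -
         (∮ ζ in C(0, 1), (w / z) * ((ζ - z)⁻¹ - (ζ - 0)⁻¹))) := by
        rw [circleIntegral.integral_sub hint1 hint2]
    _ = g z := by
        rw [key, circleIntegral.integral_const_mul,
          circleIntegral.integral_sub hintz hint0,
          circleIntegral.integral_sub_inv_of_mem_ball hz,
          circleIntegral.integral_sub_inv_of_mem_ball (mem_ball_self one_pos)]
        simp only [sub_self, mul_zero, sub_zero, smul_eq_mul]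
        field_simp
    _ = Complex.log (1 - z * w) / z ^ 2 + w / z := by
        rw [hgv z hz0]
        field_simp [hf_def]
        ring
end

section
/- For all z, z̃ in the open unit disc of ℂ with z ≠ 0, (1/π) ∫∫_{|ζ|<1} log(1 − ζ z̃̄)/(ζ(ζ − z)) dξdη = ((1 − |z|²)/z²) · log(1 − z z̃̄) + z̃̄/z. -/
open MeasureTheory Metric ComplexConjugate

open Set Real

lemma integrableOn_polar_iff {E : Type*} [NormedAddCommGroup E] [NormedSpace ℝ E]
    (f : ℝ × ℝ → E) :
    IntegrableOn (fun p => p.1 • f (polarCoord.symm p)) polarCoord.target ↔ Integrable f := by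
  have hmeas : MeasurableSet polarCoord.target := polarCoord.open_target.measurableSet
  set B : ℝ × ℝ → ℝ × ℝ →L[ℝ] ℝ × ℝ := fun p =>
    LinearMap.toContinuousLinearMap (Matrix.toLin (Module.Basis.finTwoProd ℝ) (Module.Basis.finTwoProd ℝ)
      !![Real.cos p.2, -p.1 * Real.sin p.2; Real.sin p.2, p.1 * Real.cos p.2]) with hB
  have A : ∀ p ∈ polarCoord.target,
      HasFDerivWithinAt polarCoord.symm (B p) polarCoord.target p := fun p _ =>
    (hasFDerivAt_polarCoord_symm p).hasFDerivWithinAt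
  have B_det : ∀ p, (B p).det = p.1 := by
    intro p
    conv_rhs => rw [← one_mul p.1, ← Real.cos_sq_add_sin_sq p.2]
    simp only [hB, neg_mul, LinearMap.det_toContinuousLinearMap, LinearMap.det_toLin,
      Matrix.det_fin_two_of, sub_neg_eq_add]
    ring
  have hinj : Set.InjOn polarCoord.symm polarCoord.target := by
    have := polarCoord.symm.injOn
    rwa [OpenPartialHomeomorph.symm_source] at this
  have key := integrableOn_image_iff_integrableOn_abs_det_fderiv_smul volume hmeas A hinj f
  rw [polarCoord.symm_image_target_eq_source] at key
  have h1 : Integrable f ↔ IntegrableOn f polarCoord.source := by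
    rw [IntegrableOn, Measure.restrict_congr_set polarCoord_source_ae_eq_univ,
      Measure.restrict_univ]
  rw [h1, key]
  refine integrableOn_congr_fun (fun p hp => ?_) hmeas
  rw [B_det, abs_of_pos hp.1]

lemma integrableOn_polar_iff_complex {E : Type*} [NormedAddCommGroup E] [NormedSpace ℝ E]
    (f : ℂ → E) :
    IntegrableOn (fun p : ℝ × ℝ => p.1 • f (Complex.polarCoord.symm p)) polarCoord.target ↔
      Integrable f := by
  rw [← (Complex.volume_preserving_equiv_real_prod.symm).integrable_comp_emb
    Complex.measurableEquivRealProd.symm.measurableEmbedding,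
    ← integrableOn_polar_iff]
  rfl

lemma integrableOn_inv_norm (R : ℝ) :
    IntegrableOn (fun ζ : ℂ => ‖ζ‖⁻¹) (ball (0 : ℂ) R) := by
  rw [← integrable_indicator_iff measurableSet_ball,
    ← integrableOn_polar_iff_complex]
  have hrect : MeasurableSet (Ioo (0:ℝ) R ×ˢ Ioo (-π) π) :=
    measurableSet_Ioo.prod measurableSet_Ioo
  have hfin : volume (Ioo (0:ℝ) R ×ˢ Ioo (-π) π) < ⊤ := by
    rw [Measure.volume_eq_prod, Measure.prod_prod]
    exact ENNReal.mul_lt_top (by simp [Real.volume_Ioo]) (by simp [Real.volume_Ioo])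
  have hint : IntegrableOn ((Ioo (0:ℝ) R ×ˢ Ioo (-π) π).indicator (fun _ => (1:ℝ)))
      polarCoord.target := by
    rw [IntegrableOn, integrable_indicator_iff hrect]
    refine integrableOn_const ?_
    exact (lt_of_le_of_lt (Measure.restrict_apply_le _ _) hfin).ne
  refine hint.congr_fun ?_ polarCoord.open_target.measurableSet
  rintro ⟨r, θ⟩ hp
  have hr : (0:ℝ) < r := hp.1
  have habs : ‖Complex.polarCoord.symm (r, θ)‖ = r := by
    rw [Complex.norm_polarCoord_symm]; exact abs_of_pos hr
  have hmem : Complex.polarCoord.symm (r, θ) ∈ ball (0:ℂ) R ↔ r < R := by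
    rw [mem_ball, Complex.dist_eq, sub_zero, habs]
  dsimp only
  by_cases hrR : r < R
  · rw [indicator_of_mem (show (r,θ) ∈ Ioo (0:ℝ) R ×ˢ Ioo (-π) π from ⟨⟨hr, hrR⟩, hp.2⟩),
      indicator_of_mem (hmem.2 hrR)]
    have hn : ‖Complex.polarCoord.symm (r, θ)‖ = r := habs
    rw [smul_eq_mul, hn, mul_inv_cancel₀ hr.ne']
  · rw [indicator_of_notMem (fun h : (r,θ) ∈ Ioo (0:ℝ) R ×ˢ Ioo (-π) π => hrR h.1.2),
      indicator_of_notMem (fun h => hrR (hmem.1 h)), smul_zero]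

lemma integrableOn_inv_norm_sub (w : ℂ) (R : ℝ) :
    IntegrableOn (fun ζ : ℂ => ‖ζ - w‖⁻¹) (ball w R) := by
  have h0 : Integrable ((ball (0:ℂ) R).indicator (fun ζ : ℂ => ‖ζ‖⁻¹)) := by
    rw [integrable_indicator_iff measurableSet_ball]; exact integrableOn_inv_norm R
  have h := h0.comp_sub_right w
  rw [← integrable_indicator_iff measurableSet_ball]
  convert h using 2 with ζ
  · rfl
  by_cases hm : ζ ∈ ball w R
  · rw [indicator_of_mem hm, indicator_of_mem]
    simpa [mem_ball, Complex.dist_eq] using hm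
  · rw [indicator_of_notMem hm, indicator_of_notMem]
    simpa [mem_ball, Complex.dist_eq] using hm

lemma circle_eq (G : ℂ → ℂ) {U : Set ℂ} (hU : IsOpen U) (hUb : closedBall (0:ℂ) 1 ⊆ U)
    (hG : DifferentiableOn ℂ G U) {z : ℂ} (hz1 : ‖z‖ < 1) (hz0 : z ≠ 0)
    {r : ℝ} (hr0 : 0 < r) (hr1 : r < 1) (hrz : r ≠ ‖z‖) :
    (∮ ζ in C(0, r), ζ⁻¹ • (G ζ * (ζ - z)⁻¹)) =
      (2 * π * Complex.I) • (z⁻¹ * ((if ‖z‖ < r then G z else 0) - G 0)) := by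
  have hsub : closedBall (0:ℂ) r ⊆ U :=
    (closedBall_subset_closedBall hr1.le).trans hUb
  have hGr : DifferentiableOn ℂ G (closedBall 0 r) := hG.mono hsub
  have hGc : ContinuousOn G (closedBall (0:ℂ) r) := hGr.continuousOn
  have habs : ∀ ζ ∈ sphere (0:ℂ) r, ‖ζ‖ = r := by
    intro ζ hζ
    simpa [Complex.dist_eq] using hζ
  have hζ0 : ∀ ζ ∈ sphere (0:ℂ) r, ζ ≠ 0 := by
    intro ζ hζ h0
    rw [h0] at hζ; simp at hζ
    exact hr0.ne.symm hζ.symm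
  have hζz : ∀ ζ ∈ sphere (0:ℂ) r, ζ ≠ z := by
    intro ζ hζ h0
    exact hrz (by rw [← habs ζ hζ, h0])
  -- continuity of pieces on sphere
  have hsph : sphere (0:ℂ) r ⊆ closedBall (0:ℂ) r := sphere_subset_closedBall
  have hc1 : ContinuousOn (fun ζ : ℂ => z⁻¹ • ((ζ - z)⁻¹ • G ζ)) (sphere (0:ℂ) r) := by
    refine ContinuousOn.const_smul ?_ z⁻¹
    refine ContinuousOn.smul (ContinuousOn.inv₀ (continuousOn_id.sub continuousOn_const) ?_)
      (hGc.mono hsph)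
    exact fun ζ hζ => sub_ne_zero.2 (hζz ζ hζ)
  have hc2 : ContinuousOn (fun ζ : ℂ => z⁻¹ • (ζ⁻¹ • G ζ)) (sphere (0:ℂ) r) := by
    refine ContinuousOn.const_smul ?_ z⁻¹
    exact ContinuousOn.smul (ContinuousOn.inv₀ continuousOn_id (fun ζ hζ => hζ0 ζ hζ))
      (hGc.mono hsph)
  have h2 : (∮ ζ in C(0, r), ζ⁻¹ • G ζ) = (2 * π * Complex.I : ℂ) • G 0 := by
    have := hGr.circleIntegral_sub_inv_smul (w := 0) (mem_ball_self hr0)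
    simpa [sub_zero] using this
  have h1 : (∮ ζ in C(0, r), (ζ - z)⁻¹ • G ζ) =
      (2 * π * Complex.I : ℂ) • (if ‖z‖ < r then G z else 0) := by
    by_cases hlt : ‖z‖ < r
    · rw [if_pos hlt]
      exact hGr.circleIntegral_sub_inv_smul (by simpa [mem_ball, Complex.dist_eq] using hlt)
    · rw [if_neg hlt, smul_zero]
      have hgt : r < ‖z‖ := lt_of_le_of_ne (not_lt.1 hlt) (by exact hrz)
      refine Complex.circleIntegral_eq_zero_of_differentiable_on_off_countable hr0.le
        Set.countable_empty ?_ ?_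
      · refine ContinuousOn.smul (ContinuousOn.inv₀
          (continuousOn_id.sub continuousOn_const) ?_) hGc
        intro ζ hζ
        refine sub_ne_zero.2 fun h => ?_
        rw [show ζ = z from h] at hζ
        simp only [mem_closedBall, Complex.dist_eq, sub_zero] at hζ
        exact absurd hζ (not_le.2 hgt)
      · intro x hx
        have hxU : x ∈ U := hsub (ball_subset_closedBall hx.1)
        have hxz : x ≠ z := fun h => by
          have := hx.1
          rw [h] at this
          simp only [mem_ball, Complex.dist_eq, sub_zero] at this
          exact absurd this (not_lt.2 hgt.le)
        exact ((differentiableAt_id.sub_const z).inv (sub_ne_zero.2 hxz)).smul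
          (hG.differentiableAt (hU.mem_nhds hxU))
  calc (∮ ζ in C(0, r), ζ⁻¹ • (G ζ * (ζ - z)⁻¹))
      = ∮ ζ in C(0, r), (z⁻¹ • ((ζ - z)⁻¹ • G ζ) - z⁻¹ • (ζ⁻¹ • G ζ)) := by
        refine circleIntegral.integral_congr hr0.le fun ζ hζ => ?_
        have h0 := hζ0 ζ hζ
        have hz' := sub_ne_zero.2 (hζz ζ hζ)
        simp only [smul_eq_mul]
        field_simp
        ring
    _ = z⁻¹ • (∮ ζ in C(0, r), (ζ - z)⁻¹ • G ζ) - z⁻¹ • (∮ ζ in C(0, r), ζ⁻¹ • G ζ) := by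
        rw [circleIntegral.integral_sub (hc1.circleIntegrable hr0.le)
          (hc2.circleIntegrable hr0.le), circleIntegral.integral_smul,
          circleIntegral.integral_smul]
    _ = (2 * π * Complex.I) • (z⁻¹ * ((if ‖z‖ < r then G z else 0) - G 0)) := by
        rw [h1, h2]
        simp only [smul_eq_mul]
        ring

lemma inner_to_circle (f : ℂ → ℂ) {r : ℝ} (hr0 : 0 < r) :
    ∫ θ in Ioo (-π) π, f (Complex.polarCoord.symm (r, θ)) =
      (-Complex.I) • ∮ ζ in C(0, r), ζ⁻¹ • f ζ := by
  have hpc : ∀ θ : ℝ, Complex.polarCoord.symm (r, θ) = circleMap 0 r θ := by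
    intro θ
    rw [Complex.polarCoord_symm_apply]
    simp [circleMap, Complex.exp_mul_I]
  have hper : Function.Periodic (fun θ : ℝ => f (circleMap 0 r θ)) (2 * π) :=
    fun θ => by simp [(periodic_circleMap 0 r) θ]
  have h1 : ∫ θ in Ioo (-π) π, f (Complex.polarCoord.symm (r, θ)) =
      ∫ θ in (0:ℝ)..(2*π), f (circleMap 0 r θ) := by
    rw [← integral_Ioc_eq_integral_Ioo]
    have : ∫ θ in Ioc (-π) π, f (Complex.polarCoord.symm (r, θ)) =
        ∫ θ in (-π)..π, f (circleMap 0 r θ) := by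
      rw [intervalIntegral.integral_of_le (by linarith [pi_pos])]
      congr 1
      ext θ
      rw [hpc θ]
    rw [this]
    have := hper.intervalIntegral_add_eq (-π) 0
    simpa [neg_add_eq_sub, show -π + 2*π = π by ring] using this
  have h2 : (∮ ζ in C(0, r), ζ⁻¹ • f ζ) =
      Complex.I • ∫ θ in (0:ℝ)..(2*π), f (circleMap 0 r θ) := by
    rw [circleIntegral, ← intervalIntegral.integral_smul]
    refine intervalIntegral.integral_congr fun θ _ => ?_
    rw [deriv_circleMap]
    have hne : circleMap 0 r θ ≠ 0 := by
      simpa [circleMap_eq_center_iff] using hr0.ne'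
    have hsc : circleMap 0 r θ * Complex.I * (circleMap 0 r θ)⁻¹ = Complex.I := by
      field_simp
    rw [smul_smul, hsc]
  rw [h1, h2, smul_smul]
  norm_num [Complex.I_mul_I]

theorem main_polar (G : ℂ → ℂ) {U : Set ℂ} (hU : IsOpen U) (hUb : closedBall (0:ℂ) 1 ⊆ U)
    (hG : DifferentiableOn ℂ G U) {z : ℂ} (hz1 : ‖z‖ < 1) (hz0 : z ≠ 0) :
    ∫ ζ in ball (0:ℂ) 1, G ζ * (ζ - z)⁻¹ =
      (π : ℂ) * z⁻¹ * ((1 - ((‖z‖ : ℝ) : ℂ)^2) * G z - G 0) := by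
  set f : ℂ → ℂ := fun ζ => G ζ * (ζ - z)⁻¹ with hf
  -- integrability on the ball
  have hball1 : ball (0:ℂ) 1 ⊆ closedBall 0 1 := ball_subset_closedBall
  have hGc : ContinuousOn G (closedBall (0:ℂ) 1) := (hG.mono hUb).continuousOn
  obtain ⟨M, hM⟩ := (isCompact_closedBall (0:ℂ) 1).exists_bound_of_continuousOn hGc
  set M' : ℝ := max M 0 with hM'
  have hM'0 : 0 ≤ M' := le_max_right _ _
  have hMb : ∀ ζ ∈ closedBall (0:ℂ) 1, ‖G ζ‖ ≤ M' := fun ζ hζ =>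
    (hM ζ hζ).trans (le_max_left _ _)
  have hsub2 : ball (0:ℂ) 1 ⊆ ball z 2 := by
    intro ζ hζ
    rw [mem_ball, Complex.dist_eq]
    calc ‖ζ - z‖ ≤ ‖ζ‖ + ‖z‖ := by
          exact norm_sub_le ζ z
      _ < 2 := by
          rw [mem_ball, Complex.dist_eq, sub_zero] at hζ
          linarith
  have hbound : IntegrableOn (fun ζ : ℂ => M' * ‖ζ - z‖⁻¹) (ball (0:ℂ) 1) := by
    exact (((integrableOn_inv_norm_sub z 2).mono_set hsub2)).const_mul M'
  have hmeasf : AEStronglyMeasurable f (volume.restrict (ball (0:ℂ) 1)) := by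
    refine AEStronglyMeasurable.mul ?_ ?_
    · exact ((hG.mono hUb).continuousOn.mono hball1).aestronglyMeasurable measurableSet_ball
    · exact ((measurable_id.sub_const z).inv).aestronglyMeasurable
  have hfint : IntegrableOn f (ball (0:ℂ) 1) := by
    refine Integrable.mono' hbound hmeasf ?_
    refine (ae_restrict_iff' measurableSet_ball).2 (ae_of_all _ fun ζ hζ => ?_)
    rw [hf]
    simp only [norm_mul, norm_inv]
    gcongr
    exact hMb ζ (hball1 hζ)
  -- pass to polar coordinates
  have hsymm_meas : Measurable (fun p : ℝ × ℝ => Complex.polarCoord.symm p) := by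
    have : (fun p : ℝ × ℝ => Complex.polarCoord.symm p) =
        fun p : ℝ × ℝ => (p.1 : ℂ) * (Real.cos p.2 + Real.sin p.2 * Complex.I) := by
      funext p; exact Complex.polarCoord_symm_apply p
    rw [this]
    fun_prop
  set rect : Set (ℝ × ℝ) := Ioo (0:ℝ) 1 ×ˢ Ioo (-π) π with hrect
  have hrectm : MeasurableSet rect := measurableSet_Ioo.prod measurableSet_Ioo
  have hinter : polarCoord.target ∩ (fun p : ℝ × ℝ => Complex.polarCoord.symm p) ⁻¹'
      (ball (0:ℂ) 1) = rect := by
    ext ⟨r, θ⟩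
    simp only [mem_inter_iff, mem_preimage, mem_ball, Complex.dist_eq, sub_zero,
      polarCoord_target, mem_prod, mem_Ioi, mem_Ioo, hrect]
    constructor
    · rintro ⟨⟨h1, h2⟩, h3⟩
      rw [Complex.norm_polarCoord_symm, abs_of_pos h1] at h3
      exact ⟨⟨h1, h3⟩, h2⟩
    · rintro ⟨⟨h1, h3⟩, h2⟩
      refine ⟨⟨h1, h2⟩, ?_⟩
      rw [Complex.norm_polarCoord_symm, abs_of_pos h1]
      exact h3
  have hindic : ∀ p : ℝ × ℝ, p.1 • (ball (0:ℂ) 1).indicator f (Complex.polarCoord.symm p) =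
      ((fun p : ℝ × ℝ => Complex.polarCoord.symm p) ⁻¹' (ball (0:ℂ) 1)).indicator
        (fun p : ℝ × ℝ => p.1 • f (Complex.polarCoord.symm p)) p := by
    intro p
    by_cases hp : Complex.polarCoord.symm p ∈ ball (0:ℂ) 1
    · rw [indicator_of_mem hp, indicator_of_mem (mem_preimage.2 hp)]
    · rw [indicator_of_notMem hp, smul_zero,
        indicator_of_notMem (fun h => hp (mem_preimage.1 h))]
  have step1 : ∫ ζ in ball (0:ℂ) 1, f ζ =
      ∫ p in rect, p.1 • f (Complex.polarCoord.symm p) := by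
    rw [← integral_indicator measurableSet_ball, ← Complex.integral_comp_polarCoord_symm]
    calc ∫ p in polarCoord.target, p.1 • (ball (0:ℂ) 1).indicator f (Complex.polarCoord.symm p)
        = ∫ p in polarCoord.target,
            ((fun p : ℝ × ℝ => Complex.polarCoord.symm p) ⁻¹' (ball (0:ℂ) 1)).indicator
              (fun p : ℝ × ℝ => p.1 • f (Complex.polarCoord.symm p)) p := by
          refine setIntegral_congr_fun polarCoord.open_target.measurableSet fun p _ => hindic p
      _ = ∫ p in rect, p.1 • f (Complex.polarCoord.symm p) := by
          rw [setIntegral_indicator (hsymm_meas measurableSet_ball), hinter]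
  -- integrability on rect
  have hQint : IntegrableOn (fun p : ℝ × ℝ => p.1 • f (Complex.polarCoord.symm p)) rect := by
    have h1 : Integrable ((ball (0:ℂ) 1).indicator f) := by
      rwa [integrable_indicator_iff measurableSet_ball]
    have h2 := (integrableOn_polar_iff_complex ((ball (0:ℂ) 1).indicator f)).2 h1
    have h3 : IntegrableOn (((fun p : ℝ × ℝ => Complex.polarCoord.symm p) ⁻¹'
        (ball (0:ℂ) 1)).indicator (fun p : ℝ × ℝ => p.1 • f (Complex.polarCoord.symm p)))
        polarCoord.target := by
      refine h2.congr_fun (fun p _ => hindic p) polarCoord.open_target.measurableSet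
    have h4 := (integrable_indicator_iff (hsymm_meas measurableSet_ball)).1 h3
    rw [IntegrableOn, Measure.restrict_restrict (hsymm_meas measurableSet_ball)] at h4
    rw [IntegrableOn, ← hinter, Set.inter_comm]
    exact h4
  -- Fubini
  have step2 : (∫ p in rect, p.1 • f (Complex.polarCoord.symm p)) =
      ∫ r in Ioo (0:ℝ) 1, ∫ θ in Ioo (-π) π, r • f (Complex.polarCoord.symm (r, θ)) := by
    rw [hrect, Measure.volume_eq_prod] at hQint ⊢
    exact setIntegral_prod _ hQint
  set a : ℂ := -(2 * (π:ℂ) * z⁻¹ * G 0) with ha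
  set b : ℂ := 2 * (π:ℂ) * z⁻¹ * G z with hb
  set φ : ℝ → ℂ := fun r =>
    (r:ℂ) * a + (Ioi ‖z‖).indicator (fun s : ℝ => (s:ℂ) * b) r with hφ
  have step3 : ∀ r ∈ Ioo (0:ℝ) 1, r ≠ ‖z‖ →
      (∫ θ in Ioo (-π) π, r • f (Complex.polarCoord.symm (r, θ))) = φ r := by
    intro r hr hne
    rw [integral_smul, inner_to_circle f hr.1,
      circle_eq G hU hUb hG hz1 hz0 hr.1 hr.2 hne]
    simp only [hφ]
    by_cases hlt : ‖z‖ < r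
    · rw [if_pos hlt, indicator_of_mem (mem_Ioi.2 hlt)]
      simp only [smul_eq_mul, Complex.real_smul, ha, hb]
      linear_combination (-(2 * (π:ℂ) * r * z⁻¹ * (G z - G 0))) * Complex.I_mul_I
    · rw [if_neg hlt, indicator_of_notMem (fun h => hlt (mem_Ioi.1 h))]
      simp only [smul_eq_mul, Complex.real_smul, ha, hb]
      linear_combination (-(2 * (π:ℂ) * r * z⁻¹ * (0 - G 0))) * Complex.I_mul_I
  have step4 : (∫ r in Ioo (0:ℝ) 1, ∫ θ in Ioo (-π) π,
      r • f (Complex.polarCoord.symm (r, θ))) = ∫ r in Ioo (0:ℝ) 1, φ r := by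
    refine setIntegral_congr_ae measurableSet_Ioo ?_
    have h0 : ∀ᵐ (r:ℝ), r ≠ ‖z‖ := by
      refine ae_iff.2 ?_
      simp only [ne_eq, not_not, setOf_eq_eq_singleton]
      exact Real.volume_singleton
    filter_upwards [h0] with r hrne hrmem
    exact step3 r hrmem hrne
  have ia : IntegrableOn (fun r : ℝ => (r:ℂ) * a) (Ioo (0:ℝ) 1) := by
    have hc : Continuous fun r : ℝ => (r:ℂ) * a := by fun_prop
    exact (hc.continuousOn.integrableOn_compact isCompact_Icc).mono_set Ioo_subset_Icc_self
  have ib0 : IntegrableOn (fun r : ℝ => (r:ℂ) * b) (Ioo (0:ℝ) 1) := by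
    have hc : Continuous fun r : ℝ => (r:ℂ) * b := by fun_prop
    exact (hc.continuousOn.integrableOn_compact isCompact_Icc).mono_set Ioo_subset_Icc_self
  have ib : IntegrableOn
      (fun r : ℝ => (Ioi ‖z‖).indicator (fun s : ℝ => (s:ℂ) * b) r)
      (Ioo (0:ℝ) 1) := by
    rw [IntegrableOn]
    exact (ib0.indicator measurableSet_Ioi)
  have intr1 : (∫ r in Ioo (0:ℝ) 1, r) = 1/2 := by
    rw [← integral_Ioc_eq_integral_Ioo, ← intervalIntegral.integral_of_le zero_le_one]
    rw [integral_id]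
    norm_num
  have intr2 : (∫ r in Ioo ‖z‖ 1, r) = (1 - ‖z‖^2)/2 := by
    rw [← integral_Ioc_eq_integral_Ioo, ← intervalIntegral.integral_of_le hz1.le]
    rw [integral_id]
    ring
  have hioo : Ioo (0:ℝ) 1 ∩ Ioi ‖z‖ = Ioo ‖z‖ 1 := by
    ext r
    simp only [mem_inter_iff, mem_Ioo, mem_Ioi]
    constructor
    · rintro ⟨⟨_, h1⟩, h2⟩; exact ⟨h2, h1⟩
    · rintro ⟨h2, h1⟩
      exact ⟨⟨lt_of_le_of_lt (norm_nonneg z) h2, h1⟩, h2⟩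
  have step5 : (∫ r in Ioo (0:ℝ) 1, φ r) =
      (1/2 : ℝ) • a + ((1 - ‖z‖^2)/2 : ℝ) • b := by
    rw [hφ, integral_add ia ib]
    congr 1
    · rw [show (fun r : ℝ => (r:ℂ) * a) = fun r : ℝ => r • a from
        funext fun r => (Complex.real_smul (x := r) (z := a)).symm, integral_smul_const, intr1]
    · rw [setIntegral_indicator measurableSet_Ioi, hioo]
      rw [show (fun r : ℝ => (r:ℂ) * b) = fun r : ℝ => r • b from
        funext fun r => (Complex.real_smul (x := r) (z := b)).symm, integral_smul_const, intr2]
  rw [step1, step2, step4, step5, ha, hb]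
  simp only [Complex.real_smul]
  push_cast
  field_simp
  ring

theorem stmt_19 (z zt : ℂ) (hz : z ∈ ball (0 : ℂ) 1) (hzt : zt ∈ ball (0 : ℂ) 1)
    (hz0 : z ≠ 0) :
    (1 / (Real.pi : ℂ)) *
      ∫ ζ in ball (0 : ℂ) 1, Complex.log (1 - ζ * conj zt) / (ζ * (ζ - z)) =
    ((1 - ((‖z‖ : ℝ) : ℂ) ^ 2) / z ^ 2) * Complex.log (1 - z * conj zt) +
      conj zt / z := by
  set c : ℂ := conj zt with hc
  have hcabs : ‖c‖ < 1 := by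
    rw [hc, Complex.norm_conj]
    simpa [Complex.dist_eq] using hzt
  have hz1 : ‖z‖ < 1 := by simpa [Complex.dist_eq] using hz
  set F : ℂ → ℂ := fun ζ => Complex.log (1 - ζ * c) with hF
  set U : Set ℂ := {ζ : ℂ | ‖ζ‖ * ‖c‖ < 1} with hU
  have hUopen : IsOpen U := isOpen_lt (continuous_norm.mul continuous_const)
    continuous_const
  have hUb : closedBall (0:ℂ) 1 ⊆ U := by
    intro ζ hζ
    rw [mem_closedBall, Complex.dist_eq, sub_zero] at hζ
    have h1 : ‖ζ‖ * ‖c‖ ≤ 1 * ‖c‖ :=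
      mul_le_mul_of_nonneg_right hζ (norm_nonneg c)
    simpa [hU] using lt_of_le_of_lt h1 (by simpa using hcabs)
  have hslit : ∀ ζ ∈ U, (1 - ζ * c) ∈ Complex.slitPlane := by
    intro ζ hζ
    rw [Complex.mem_slitPlane_iff]
    left
    have h1 : (1 - ζ * c).re = 1 - (ζ * c).re := by simp [Complex.sub_re]
    have h2 : (ζ * c).re ≤ ‖ζ * c‖ := Complex.re_le_norm _
    rw [norm_mul] at h2
    rw [h1]
    have := hζ
    rw [hU, mem_setOf_eq] at this
    linarith
  have hFd : DifferentiableOn ℂ F U := by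
    intro ζ hζ
    have h1 : DifferentiableAt ℂ (fun ζ : ℂ => 1 - ζ * c) ζ :=
      (differentiableAt_id.mul_const c).const_sub 1
    exact (h1.clog (hslit ζ hζ)).differentiableWithinAt
  have h0U : (0:ℂ) ∈ U := by simp [hU]
  set G : ℂ → ℂ := dslope F 0 with hG
  have hGd : DifferentiableOn ℂ G U :=
    (Complex.differentiableOn_dslope (hUopen.mem_nhds h0U)).2 hFd
  have hF0 : F 0 = 0 := by simp [hF]
  have hGz : ∀ w : ℂ, w ≠ 0 → G w = F w / w := by
    intro w hw
    rw [hG, dslope_of_ne F hw, slope_def_field, hF0, sub_zero, sub_zero]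
  have hG0 : G 0 = -c := by
    have h1 : HasDerivAt (fun ζ : ℂ => 1 - ζ * c) (-c) 0 := by
      have := ((hasDerivAt_id (0:ℂ)).mul_const c).const_sub 1
      simpa using this
    have h2 : HasDerivAt Complex.log ((1:ℂ))⁻¹ ((fun ζ : ℂ => 1 - ζ * c) 0) := by
      have : ((fun ζ : ℂ => 1 - ζ * c) 0) = 1 := by simp
      rw [this]
      exact Complex.hasDerivAt_log Complex.one_mem_slitPlane
    have h3 : HasDerivAt F ((1:ℂ)⁻¹ * (-c)) 0 := by have := h2.comp 0 h1; exact this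
    rw [hG, dslope_same]
    rw [h3.deriv]
    simp
  have hcongr : (∫ ζ in ball (0 : ℂ) 1, Complex.log (1 - ζ * c) / (ζ * (ζ - z))) =
      ∫ ζ in ball (0 : ℂ) 1, G ζ * (ζ - z)⁻¹ := by
    refine setIntegral_congr_ae measurableSet_ball ?_
    have h0 : ∀ᵐ (ζ:ℂ), ζ ≠ 0 := by
      refine ae_iff.2 ?_
      simp only [ne_eq, not_not, setOf_eq_eq_singleton]
      exact measure_singleton 0
    filter_upwards [h0] with ζ hζ0 _
    rw [hGz ζ hζ0, div_eq_mul_inv, div_eq_mul_inv, mul_inv, ← mul_assoc]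
  rw [hcongr, main_polar G hUopen hUb hGd hz1 hz0, hGz z hz0, hG0]
  simp only [hF]
  have hπ : (π : ℂ) ≠ 0 := Complex.ofReal_ne_zero.2 Real.pi_ne_zero
  field_simp
  ring
end
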